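/- arXiv:2303.16979 — 2 statements merged into one kernel-verified Lean document; each statement's English description precedes it below -/
import Mathlib

section
/- There exists a continuous map Γ : [−1,1]×[−1,1] → X such that Γ(t,−1) = η⁺₁(t) and Γ(t,1) = L(t) for all t ∈ [−1,1], and such that for ε ∈ {−1,1} and all s ∈ [−1,1], Γ(ε,s) is obtained from Γ(−ε,s) by interchanging the rectangles C₁ and C₂. In particular, the loop in X obtained by concatenating η⁺₁ with its closed-label swap is freely homotopic in X to the loop obtained by concatenating L with its closed-label swap. (This is the two-dimensional case of the lemma asserting that the chains η_n and α_n(ℓ_n, μ_n) are homologous.) -/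
/-- A 4-tuple of rectangles `(C₁, C₂, O₋, O₊)` in `ℝ²`, each recorded by the endpoints of
its two defining intervals: index `0` is `C₁`, `1` is `C₂`, `2` is `O₋`, `3` is `O₊`; the
entry at each index is `((a₀, b₀), (a₁, b₁))`, standing for `[a₀,b₀] × [a₁,b₁]`. -/
abbrev Cfg : Type := Fin 4 → (ℝ × ℝ) × (ℝ × ℝ)

/-- The rectangle `[a₀,b₀] × [a₁,b₁]` determined by the endpoint data `r = ((a₀,b₀),(a₁,b₁))`. -/
def rect (r : (ℝ × ℝ) × (ℝ × ℝ)) : Set (ℝ × ℝ) :=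
  Set.Icc r.1.1 r.1.2 ×ˢ Set.Icc r.2.1 r.2.2

/-- The space `X` of 4-tuples `(C₁, C₂, O₋, O₊)` of rectangles (products of two nondegenerate
closed intervals) contained in `[-1,1]²`, with pairwise disjoint interiors, such that the
first intervals of `C₁` and `C₂` are contained in `[0,1]` and the first intervals of `O₋`
and `O₊` have left endpoint `0`.  It is topologized as a subspace of `ℝ^16` via the interval
endpoints. -/
def Xcfg : Set Cfg :=
  {x | (∀ k, (x k).1.1 < (x k).1.2 ∧ (x k).2.1 < (x k).2.2) ∧
       (∀ k, -1 ≤ (x k).1.1 ∧ (x k).1.2 ≤ 1 ∧ -1 ≤ (x k).2.1 ∧ (x k).2.2 ≤ 1) ∧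
       (∀ k l, k ≠ l → Disjoint (interior (rect (x k))) (interior (rect (x l)))) ∧
       (0 ≤ (x 0).1.1 ∧ (x 0).1.2 ≤ 1) ∧ (0 ≤ (x 1).1.1 ∧ (x 1).1.2 ≤ 1) ∧
       (x 2).1.1 = 0 ∧ (x 3).1.1 = 0}

/-- Interchanging the two closed rectangles `C₁` and `C₂` of a configuration. -/
def swapC (x : Cfg) : Cfg := fun k => x (Equiv.swap (0 : Fin 4) 1 k)

/-- `J(+) = [0,1]` and `J(-) = [-1,0]` (`true` is `+`, `false` is `-`). -/
def Jb (b : Bool) : ℝ × ℝ := if b then (0, 1) else (-1, 0)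

/-- `T(u) = max(1/2, (1+u)/2)`. -/
noncomputable def Tf (u : ℝ) : ℝ := max (1/2) ((1 + u) / 2)

/-- `I₊(u) = [min(0,u), 1]` and `I₋(u) = [-1, -min(0,u)]`. -/
noncomputable def Ib (b : Bool) (u : ℝ) : ℝ × ℝ :=
  if b then (min 0 u, 1) else (-1, -min 0 u)

/-- The regime `|t| ≤ 1/3` of `η⁺₁`, with sign `b` and parameter `u = 6|t| - 1`:
`C₁ = [1/2,1] × [-1,1]`, `C₂ = [1/4,1/2] × I_b(u)`, `O_b = [0,1/4] × J(b)`,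
`O_{-b} = [0, T(u)/2] × J(-b)`. -/
noncomputable def etaIn (b : Bool) (u : ℝ) : Cfg := fun k =>
  if k = 0 then ((1/2, 1), (-1, 1))
  else if k = 1 then ((1/4, 1/2), Ib b u)
  else if k = 2 then ((0, if b then Tf u / 2 else 1/4), Jb false)
  else ((0, if b then 1/4 else Tf u / 2), Jb true)

/-- The regime `1/3 ≤ |t| ≤ 2/3` of `η⁺₁`, with sign `b` and parameter `u = 6|t| - 3`:
`C₁ = [1/2,1] × I_{-b}(u)`, `C₂ = [T(u)/2, T(u)] × J(b)`, `O_b = [0, T(u)/2] × J(b)`,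
`O_{-b} = [0,1/2] × J(-b)`. -/
noncomputable def etaMid (b : Bool) (u : ℝ) : Cfg := fun k =>
  if k = 0 then ((1/2, 1), Ib (!b) u)
  else if k = 1 then ((Tf u / 2, Tf u), Jb b)
  else if k = 2 then ((0, if b then 1/2 else Tf u / 2), Jb false)
  else ((0, if b then Tf u / 2 else 1/2), Jb true)

/-- The regime `|t| ≥ 2/3` of `η⁺₁`, with sign `b`:
`C₁ = [1/2,1] × J(-b)`, `C₂ = [1/2,1] × J(b)`, `O₋ = [0,1/2] × J(-)`,
`O₊ = [0,1/2] × J(+)`. -/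
noncomputable def etaOut (b : Bool) : Cfg := fun k =>
  if k = 0 then ((1/2, 1), Jb (!b))
  else if k = 1 then ((1/2, 1), Jb b)
  else if k = 2 then ((0, 1/2), Jb false)
  else ((0, 1/2), Jb true)

/-- The path `η⁺₁ : [-1,1] → X`, assembled from the three regimes, with sign
`b = (0 ≤ t)`. -/
noncomputable def etaP (t : ℝ) : Cfg :=
  if |t| ≤ 1/3 then etaIn (decide (0 ≤ t)) (6 * |t| - 1)
  else if |t| ≤ 2/3 then etaMid (decide (0 ≤ t)) (6 * |t| - 3)
  else etaOut (decide (0 ≤ t))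

/-- The path `L(t) = α₁(ℓ⁺₁(t), μ₁)`, with `M = |2t|`:
`C₁ = [(13-M)/16, (15-M)/16] × [(-1-2t)/4, (1-2t)/4]`,
`C₂ = [(9+M)/16, (11+M)/16] × [(-1+2t)/4, (1+2t)/4]`,
`O₋ = [0,1/2] × [-1,0]`, `O₊ = [0,1/2] × [0,1]`. -/
noncomputable def Lmap (t : ℝ) : Cfg := fun k =>
  if k = 0 then (((13 - |2*t|)/16, (15 - |2*t|)/16), ((-1 - 2*t)/4, (1 - 2*t)/4))
  else if k = 1 then (((9 + |2*t|)/16, (11 + |2*t|)/16), ((-1 + 2*t)/4, (1 + 2*t)/4))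
  else if k = 2 then ((0, 1/2), (-1, 0))
  else ((0, 1/2), (0, 1))

/-- The loop obtained by concatenating `η⁺₁` with its closed-label swap. -/
noncomputable def concEta (t : ℝ) : Cfg :=
  if t ≤ 0 then etaP (2*t + 1) else swapC (etaP (2*t - 1))

/-- The loop obtained by concatenating `L` with its closed-label swap. -/
noncomputable def concL (t : ℝ) : Cfg :=
  if t ≤ 0 then Lmap (2*t + 1) else swapC (Lmap (2*t - 1))


open Set

section Aux

lemma disj_sep {r r' : (ℝ × ℝ) × (ℝ × ℝ)}
    (h : r.1.2 ≤ r'.1.1 ∨ r'.1.2 ≤ r.1.1 ∨ r.2.2 ≤ r'.2.1 ∨ r'.2.2 ≤ r.2.1) :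
    Disjoint (interior (rect r)) (interior (rect r')) := by
  rw [Set.disjoint_left]
  intro p hp hq
  rw [rect, interior_prod_eq, interior_Icc, interior_Icc] at hp hq
  obtain ⟨hp1, hp2⟩ := hp
  obtain ⟨hq1, hq2⟩ := hq
  simp only [Set.mem_Ioo] at hp1 hp2 hq1 hq2
  rcases h with h|h|h|h <;> linarith [hp1.1, hp1.2, hp2.1, hp2.2, hq1.1, hq1.2, hq2.1, hq2.2]

lemma pairwise_disj (x : Cfg)
    (h01 : Disjoint (interior (rect (x 0))) (interior (rect (x 1))))
    (h02 : Disjoint (interior (rect (x 0))) (interior (rect (x 2))))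
    (h03 : Disjoint (interior (rect (x 0))) (interior (rect (x 3))))
    (h12 : Disjoint (interior (rect (x 1))) (interior (rect (x 2))))
    (h13 : Disjoint (interior (rect (x 1))) (interior (rect (x 3))))
    (h23 : Disjoint (interior (rect (x 2))) (interior (rect (x 3)))) :
    ∀ k l, k ≠ l → Disjoint (interior (rect (x k))) (interior (rect (x l))) := by
  intro k l hkl
  fin_cases k <;> fin_cases l <;>
    first
      | exact absurd rfl hkl
      | assumption
      | exact h01.symm
      | exact h02.symm
      | exact h03.symm
      | exact h12.symm
      | exact h13.symm
      | exact h23.symm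

/-- linear interpolation of interval-endpoint pairs -/
noncomputable def lerp (σ : ℝ) (v w : ℝ × ℝ) : ℝ × ℝ :=
  ((1-σ)*v.1 + σ*w.1, (1-σ)*v.2 + σ*w.2)

lemma lerp_zero (v w : ℝ × ℝ) : lerp 0 v w = v := by simp [lerp]
lemma lerp_one (v w : ℝ × ℝ) : lerp 1 v w = w := by simp [lerp]

/-- the mixed configuration -/
noncomputable def cfgOf (t σx σy σo : ℝ) : Cfg := fun k =>
  (lerp (if (k:ℕ) < 2 then σx else σo) (etaP t k).1 (Lmap t k).1,
   lerp (if (k:ℕ) < 2 then σy else σo) (etaP t k).2 (Lmap t k).2)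

noncomputable def sX (s : ℝ) : ℝ := max 0 (min 1 ((s+1)*3/2))
noncomputable def sY (s : ℝ) : ℝ := max 0 (min 1 ((3*s+1)/2))
noncomputable def sO (s : ℝ) : ℝ := max 0 (min 1 ((3*s-1)/2))

noncomputable def Gam (p : ℝ × ℝ) : Cfg := cfgOf p.1 (sX p.2) (sY p.2) (sO p.2)

-- regime lemmas
lemma etaP_in_pos {t : ℝ} (h0 : 0 ≤ t) (h : t ≤ 1/3) :
    etaP t = etaIn true (6*t-1) := by
  rw [etaP, abs_of_nonneg h0, decide_eq_true h0, if_pos h]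

lemma etaP_mid_pos {t : ℝ} (h0 : 0 ≤ t) (h1 : ¬ (t ≤ 1/3)) (h2 : t ≤ 2/3) :
    etaP t = etaMid true (6*t-3) := by
  rw [etaP, abs_of_nonneg h0, decide_eq_true h0, if_neg h1, if_pos h2]

lemma etaP_out_pos {t : ℝ} (h0 : 0 ≤ t) (h2 : ¬ (t ≤ 2/3)) :
    etaP t = etaOut true := by
  rw [etaP, abs_of_nonneg h0, decide_eq_true h0, if_neg (by intro h; exact h2 (by linarith)), if_neg h2]

lemma etaP_in_neg {t : ℝ} (h0 : t < 0) (h : -t ≤ 1/3) :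
    etaP t = etaIn false (6*(-t)-1) := by
  rw [etaP, abs_of_neg h0, decide_eq_false (by exact not_le.mpr h0), if_pos h]

lemma etaP_mid_neg {t : ℝ} (h0 : t < 0) (h1 : ¬ (-t ≤ 1/3)) (h2 : -t ≤ 2/3) :
    etaP t = etaMid false (6*(-t)-3) := by
  rw [etaP, abs_of_neg h0, decide_eq_false (by exact not_le.mpr h0), if_neg h1, if_pos h2]

lemma etaP_out_neg {t : ℝ} (h0 : t < 0) (h2 : ¬ (-t ≤ 2/3)) :
    etaP t = etaOut false := by
  rw [etaP, abs_of_neg h0, decide_eq_false (by exact not_le.mpr h0),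
    if_neg (by intro h; exact h2 (by linarith)), if_neg h2]

end Aux

lemma fv2 : ((2:Fin 4):ℕ) = 2 := rfl
lemma fv3 : ((3:Fin 4):ℕ) = 3 := rfl

section Aux2
open Set

-- matching lemmas
lemma etaIn_match (b : Bool) : etaIn b 1 = etaMid b (-1) := by
  funext k
  fin_cases k <;> cases b <;>
    simp [etaIn, etaMid, Ib, Jb, Tf] <;> norm_num

lemma etaMid_match (b : Bool) : etaMid b 1 = etaOut b := by
  funext k
  fin_cases k <;> cases b <;>
    simp [etaOut, etaMid, Ib, Jb, Tf] <;> norm_num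

lemma etaIn_zero : etaIn true (-1) = etaIn false (-1) := by
  funext k
  fin_cases k <;> simp [etaIn, Ib, Jb, Tf] <;> norm_num

-- continuity
lemma cont_etaIn (b : Bool) : Continuous fun u => etaIn b u := by
  apply continuous_pi; intro k
  cases b <;> simp only [etaIn, Ib, Jb, Tf] <;> (repeat' split) <;> fun_prop

lemma cont_etaMid (b : Bool) : Continuous fun u => etaMid b u := by
  apply continuous_pi; intro k
  cases b <;> simp only [etaMid, Ib, Jb, Tf] <;> (repeat' split) <;> fun_prop

noncomputable def Fp (b : Bool) (t : ℝ) : Cfg :=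
  if t ≤ 1/3 then etaIn b (6*t-1) else if t ≤ 2/3 then etaMid b (6*t-3) else etaOut b

lemma cont_Fp (b : Bool) : Continuous (Fp b) := by
  unfold Fp
  apply Continuous.if_le
  · exact (cont_etaIn b).comp (by fun_prop)
  · apply Continuous.if_le
    · exact (cont_etaMid b).comp (by fun_prop)
    · exact continuous_const
    · fun_prop
    · fun_prop
    · intro t ht
      subst ht
      rw [show (6:ℝ)*(2/3)-3 = 1 by norm_num, etaMid_match]
  · fun_prop
  · fun_prop
  · intro t ht
    subst ht
    rw [if_pos (by norm_num : (1:ℝ)/3 ≤ 2/3), show (6:ℝ)*(1/3)-1 = 1 by norm_num,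
      show (6:ℝ)*(1/3)-3 = -1 by norm_num, etaIn_match]

lemma etaP_eq_Fp : etaP = fun t => if 0 ≤ t then Fp true t else Fp false (-t) := by
  funext t
  rcases le_or_gt 0 t with h0 | h0
  · rw [if_pos h0, etaP, abs_of_nonneg h0, decide_eq_true h0, Fp]
  · rw [if_neg (not_le.mpr h0), etaP, abs_of_neg h0,
      decide_eq_false (not_le.mpr h0), Fp]

lemma cont_etaP : Continuous etaP := by
  rw [etaP_eq_Fp]
  have : Continuous fun t : ℝ => if (fun _ => (0:ℝ)) t ≤ id t then Fp true t else Fp false (-t) :=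
    Continuous.if_le (cont_Fp true) ((cont_Fp false).comp continuous_neg)
      continuous_const continuous_id
      (by intro t ht; simp only [id_eq] at ht; subst ht
          norm_num [Fp, etaIn_zero])
  exact this

lemma cont_Lmap : Continuous Lmap := by
  apply continuous_pi; intro k
  simp only [Lmap] ; (repeat' split) <;> fun_prop

lemma cont_Gam : Continuous Gam := by
  apply continuous_pi; intro k
  unfold Gam cfgOf lerp
  have h1 : Continuous fun p : ℝ × ℝ => etaP p.1 k := (continuous_apply k).comp (cont_etaP.comp continuous_fst)
  have h2 : Continuous fun p : ℝ × ℝ => Lmap p.1 k := (continuous_apply k).comp (cont_Lmap.comp continuous_fst)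
  have hsX : Continuous sX := by unfold sX; fun_prop
  have hsY : Continuous sY := by unfold sY; fun_prop
  have hsO : Continuous sO := by unfold sO; fun_prop
  by_cases hk : (k:ℕ) < 2 <;> simp only [hk, if_true, if_false] <;> fun_prop

end Aux2

section Aux3
open Set

lemma sX_bot : sX (-1) = 0 := by
  rw [sX, show ((-1:ℝ)+1)*3/2 = 0 by norm_num, min_eq_right (by norm_num : (0:ℝ) ≤ 1), max_self]
lemma sY_bot : sY (-1) = 0 := by
  rw [sY, show (3*(-1:ℝ)+1)/2 = -1 by norm_num, min_eq_right (by norm_num : (-1:ℝ) ≤ 1),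
    max_eq_left (by norm_num : (-1:ℝ) ≤ 0)]
lemma sO_bot : sO (-1) = 0 := by
  rw [sO, show (3*(-1:ℝ)-1)/2 = -2 by norm_num, min_eq_right (by norm_num : (-2:ℝ) ≤ 1),
    max_eq_left (by norm_num : (-2:ℝ) ≤ 0)]
lemma sX_top : sX 1 = 1 := by
  rw [sX, show ((1:ℝ)+1)*3/2 = 3 by norm_num, min_eq_left (by norm_num : (1:ℝ) ≤ 3),
    max_eq_right (by norm_num : (0:ℝ) ≤ 1)]
lemma sY_top : sY 1 = 1 := by
  rw [sY, show (3*(1:ℝ)+1)/2 = 2 by norm_num, min_eq_left (by norm_num : (1:ℝ) ≤ 2),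
    max_eq_right (by norm_num : (0:ℝ) ≤ 1)]
lemma sO_top : sO 1 = 1 := by
  rw [sO, show (3*(1:ℝ)-1)/2 = 1 by norm_num, min_self,
    max_eq_right (by norm_num : (0:ℝ) ≤ 1)]

lemma Gam_bot (t : ℝ) : Gam (t, -1) = etaP t := by
  funext k
  rw [Gam]
  simp only [sX_bot, sY_bot, sO_bot, cfgOf, ite_self, lerp_zero]

lemma Gam_top (t : ℝ) : Gam (t, 1) = Lmap t := by
  funext k
  rw [Gam]
  simp only [sX_top, sY_top, sO_top, cfgOf, ite_self, lerp_one]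

lemma swapC_swapC (x : Cfg) : swapC (swapC x) = x := by
  funext k
  simp [swapC, Equiv.swap_apply_self]

lemma Gam_swap (s : ℝ) : Gam (1, s) = swapC (Gam (-1, s)) := by
  have e1 : etaP (1:ℝ) = etaOut true := etaP_out_pos (by norm_num) (by norm_num)
  have e2 : etaP (-1:ℝ) = etaOut false := etaP_out_neg (by norm_num) (by norm_num)
  funext k
  rw [Gam, Gam, swapC]
  fin_cases k <;>
    norm_num [cfgOf, e1, e2, etaOut, Lmap, Jb, lerp, Equiv.swap_apply_def, Fin.ext_iff]

lemma swapC_mem {x : Cfg} (h : x ∈ Xcfg) : swapC x ∈ Xcfg := by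
  obtain ⟨h1, h2, h3, h4, h5, h6, h7⟩ := h
  have e0 : swapC x 0 = x 1 := by rw [swapC, Equiv.swap_apply_left]
  have e1 : swapC x 1 = x 0 := by rw [swapC, Equiv.swap_apply_right]
  have e2 : swapC x 2 = x 2 := by rw [swapC, show Equiv.swap (0:Fin 4) 1 2 = 2 from by decide]
  have e3 : swapC x 3 = x 3 := by rw [swapC, show Equiv.swap (0:Fin 4) 1 3 = 3 from by decide]
  refine ⟨fun k => h1 _, fun k => h2 _, fun k l hkl => h3 _ _ ((Equiv.swap (0:Fin 4) 1).injective.ne hkl),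
    ?_, ?_, ?_, ?_⟩
  · rw [e0]; exact h5
  · rw [e1]; exact h4
  · rw [e2]; exact h6
  · rw [e3]; exact h7

lemma clamp_mem (z : ℝ) : max 0 (min 1 z) ∈ Icc (0:ℝ) 1 :=
  ⟨le_max_left _ _, max_le zero_le_one (min_le_left _ _)⟩

lemma stage1 (s : ℝ) : sY s = 0 ∨ sX s = 1 := by
  rcases le_or_gt ((3*s+1)/2) 0 with h | h
  · left; rw [sY, max_eq_left (le_trans (min_le_right _ _) h)]
  · right; rw [sX, min_eq_left (by linarith), max_eq_right zero_le_one]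

lemma stage2 (s : ℝ) : sO s = 0 ∨ sY s = 1 := by
  rcases le_or_gt ((3*s-1)/2) 0 with h | h
  · left; rw [sO, max_eq_left (le_trans (min_le_right _ _) h)]
  · right; rw [sY, min_eq_left (by linarith), max_eq_right zero_le_one]

end Aux3

section Aux4
open Set

set_option maxHeartbeats 1000000 in
lemma memB1 {t σx σy σo : ℝ}
    (ht1 : -1 ≤ t) (ht2 : t ≤ 1)
    (hx0 : 0 ≤ σx) (hx1 : σx ≤ 1) (hy0 : 0 ≤ σy) (hy1 : σy ≤ 1)
    (ho0 : 0 ≤ σo) (ho1 : σo ≤ 1)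
    (h1 : σy = 0 ∨ σx = 1) (h2 : σo = 0 ∨ σy = 1)
    (h0 : 0 ≤ t) (hr1 : t ≤ 1/3) (hu : 6*t-1 ≤ 0) :
    cfgOf t σx σy σo ∈ Xcfg := by
  have hoxeq : σo * σx = σo := by
    rcases h2 with h2'|h2'
    · rw [h2']; ring
    · rcases h1 with h1'|h1'
      · rw [h1'] at h2'; norm_num at h2'
      · rw [h1']; ring
  have habs : |2*t| = 2*t := abs_of_nonneg (by linarith)
  have hE := etaP_in_pos h0 hr1
  have hm : min (0:ℝ) (6*t-1) = 6*t-1 := min_eq_right hu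
  have hT : Tf (6*t-1) = 1/2 := max_eq_left (by linarith)
  simp only [Xcfg, Set.mem_setOf_eq]
  refine ⟨fun k => ?_, fun k => ?_, pairwise_disj _ ?_ ?_ ?_ ?_ ?_ ?_,
    ⟨?_, ?_⟩, ⟨?_, ?_⟩, ?_, ?_⟩
  · fin_cases k <;> norm_num [Fin.ext_iff, Fin.val_zero, Fin.val_one, fv2, fv3, cfgOf, hE, etaIn, Ib, Jb, Lmap, lerp, habs, hm, hT] <;>
      and_intros <;> nlinarith
  · fin_cases k <;> norm_num [Fin.ext_iff, Fin.val_zero, Fin.val_one, fv2, fv3, cfgOf, hE, etaIn, Ib, Jb, Lmap, lerp, habs, hm, hT] <;>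
      and_intros <;> nlinarith
  · apply disj_sep; right; left
    norm_num [Fin.ext_iff, Fin.val_zero, Fin.val_one, fv2, fv3, cfgOf, hE, etaIn, Ib, Jb, Lmap, lerp, habs, hm, hT]
    nlinarith [mul_nonneg hx0 (by linarith : (0:ℝ) ≤ 2-4*t)]
  · apply disj_sep; right; left
    norm_num [Fin.ext_iff, Fin.val_zero, Fin.val_one, fv2, fv3, cfgOf, hE, etaIn, Ib, Jb, Lmap, lerp, habs, hm, hT]
    nlinarith [mul_nonneg hx0 (by linarith : (0:ℝ) ≤ 5-2*t)]
  · apply disj_sep; right; left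
    norm_num [Fin.ext_iff, Fin.val_zero, Fin.val_one, fv2, fv3, cfgOf, hE, etaIn, Ib, Jb, Lmap, lerp, habs, hm, hT]
    nlinarith [mul_nonneg hx0 (by linarith : (0:ℝ) ≤ 5-2*t)]
  · apply disj_sep; right; left
    norm_num [Fin.ext_iff, Fin.val_zero, Fin.val_one, fv2, fv3, cfgOf, hE, etaIn, Ib, Jb, Lmap, lerp, habs, hm, hT]
    nlinarith [hoxeq, mul_nonneg hx0 (by linarith : (0:ℝ) ≤ 5+2*t-4*σo)]
  · apply disj_sep; right; left
    norm_num [Fin.ext_iff, Fin.val_zero, Fin.val_one, fv2, fv3, cfgOf, hE, etaIn, Ib, Jb, Lmap, lerp, habs, hm, hT]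
    nlinarith [hoxeq, mul_nonneg hx0 (by linarith : (0:ℝ) ≤ 5+2*t-4*σo)]
  · apply disj_sep; right; right; left
    norm_num [Fin.ext_iff, Fin.val_zero, Fin.val_one, fv2, fv3, cfgOf, hE, etaIn, Ib, Jb, Lmap, lerp, habs, hm, hT]
  all_goals norm_num [Fin.ext_iff, Fin.val_zero, Fin.val_one, fv2, fv3, cfgOf, hE, etaIn, Ib, Jb, Lmap, lerp, habs, hm, hT] <;> nlinarith

set_option maxHeartbeats 1000000 in
lemma memB2 {t σx σy σo : ℝ}
    (ht1 : -1 ≤ t) (ht2 : t ≤ 1)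
    (hx0 : 0 ≤ σx) (hx1 : σx ≤ 1) (hy0 : 0 ≤ σy) (hy1 : σy ≤ 1)
    (ho0 : 0 ≤ σo) (ho1 : σo ≤ 1)
    (h1 : σy = 0 ∨ σx = 1) (h2 : σo = 0 ∨ σy = 1)
    (h0 : 0 ≤ t) (hr1 : t ≤ 1/3) (hu : 0 < 6*t-1) :
    cfgOf t σx σy σo ∈ Xcfg := by
  have hoxeq : σo * σx = σo := by
    rcases h2 with h2'|h2'
    · rw [h2']; ring
    · rcases h1 with h1'|h1'
      · rw [h1'] at h2'; norm_num at h2'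
      · rw [h1']; ring
  have habs : |2*t| = 2*t := abs_of_nonneg (by linarith)
  have hE := etaP_in_pos h0 hr1
  have hm : min (0:ℝ) (6*t-1) = 0 := min_eq_left (by linarith)
  have hT : Tf (6*t-1) = (1+(6*t-1))/2 := max_eq_right (by linarith)
  simp only [Xcfg, Set.mem_setOf_eq]
  refine ⟨fun k => ?_, fun k => ?_, pairwise_disj _ ?_ ?_ ?_ ?_ ?_ ?_,
    ⟨?_, ?_⟩, ⟨?_, ?_⟩, ?_, ?_⟩
  · fin_cases k <;> norm_num [Fin.ext_iff, Fin.val_zero, Fin.val_one, fv2, fv3, cfgOf, hE, etaIn, Ib, Jb, Lmap, lerp, habs, hm, hT] <;>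
      and_intros <;> nlinarith
  · fin_cases k <;> norm_num [Fin.ext_iff, Fin.val_zero, Fin.val_one, fv2, fv3, cfgOf, hE, etaIn, Ib, Jb, Lmap, lerp, habs, hm, hT] <;>
      and_intros <;> nlinarith
  · apply disj_sep; right; left
    norm_num [Fin.ext_iff, Fin.val_zero, Fin.val_one, fv2, fv3, cfgOf, hE, etaIn, Ib, Jb, Lmap, lerp, habs, hm, hT]
    nlinarith [mul_nonneg hx0 (by linarith : (0:ℝ) ≤ 2-4*t)]
  · apply disj_sep; right; left
    norm_num [Fin.ext_iff, Fin.val_zero, Fin.val_one, fv2, fv3, cfgOf, hE, etaIn, Ib, Jb, Lmap, lerp, habs, hm, hT]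
    nlinarith [mul_nonneg (by linarith : (0:ℝ) ≤ 1-σo) (by linarith : (0:ℝ) ≤ 1-3*t),
      mul_nonneg hx0 (by linarith : (0:ℝ) ≤ 5-2*t)]
  · apply disj_sep; right; left
    norm_num [Fin.ext_iff, Fin.val_zero, Fin.val_one, fv2, fv3, cfgOf, hE, etaIn, Ib, Jb, Lmap, lerp, habs, hm, hT]
    nlinarith [mul_nonneg hx0 (by linarith : (0:ℝ) ≤ 5-2*t)]
  · rcases h1 with hst|hst
    · apply disj_sep; right; right; right
      norm_num [Fin.ext_iff, Fin.val_zero, Fin.val_one, fv2, fv3, cfgOf, hE, etaIn, Ib, Jb, Lmap, lerp, habs, hm, hT, hst]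
    · apply disj_sep; right; left
      norm_num [Fin.ext_iff, Fin.val_zero, Fin.val_one, fv2, fv3, cfgOf, hE, etaIn, Ib, Jb, Lmap, lerp, habs, hm, hT, hst]
      nlinarith [mul_nonneg (by linarith : (0:ℝ) ≤ 1-σo) (by linarith : (0:ℝ) ≤ 1-3*t)]
  · apply disj_sep; right; left
    norm_num [Fin.ext_iff, Fin.val_zero, Fin.val_one, fv2, fv3, cfgOf, hE, etaIn, Ib, Jb, Lmap, lerp, habs, hm, hT]
    nlinarith [hoxeq, mul_nonneg hx0 (by linarith : (0:ℝ) ≤ 5+2*t-4*σo)]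
  · apply disj_sep; right; right; left
    norm_num [Fin.ext_iff, Fin.val_zero, Fin.val_one, fv2, fv3, cfgOf, hE, etaIn, Ib, Jb, Lmap, lerp, habs, hm, hT]
  all_goals norm_num [Fin.ext_iff, Fin.val_zero, Fin.val_one, fv2, fv3, cfgOf, hE, etaIn, Ib, Jb, Lmap, lerp, habs, hm, hT] <;> nlinarith

set_option maxHeartbeats 1000000 in
lemma memB3 {t σx σy σo : ℝ}
    (ht1 : -1 ≤ t) (ht2 : t ≤ 1)
    (hx0 : 0 ≤ σx) (hx1 : σx ≤ 1) (hy0 : 0 ≤ σy) (hy1 : σy ≤ 1)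
    (ho0 : 0 ≤ σo) (ho1 : σo ≤ 1)
    (h1 : σy = 0 ∨ σx = 1) (h2 : σo = 0 ∨ σy = 1)
    (h0 : 0 ≤ t) (hr1 : 1/3 < t) (hr2 : t ≤ 2/3) (hu : 6*t-3 ≤ 0) :
    cfgOf t σx σy σo ∈ Xcfg := by
  have hoxeq : σo * σx = σo := by
    rcases h2 with h2'|h2'
    · rw [h2']; ring
    · rcases h1 with h1'|h1'
      · rw [h1'] at h2'; norm_num at h2'
      · rw [h1']; ring
  have habs : |2*t| = 2*t := abs_of_nonneg (by linarith)
  have hE := etaP_mid_pos h0 (by linarith) hr2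
  have hm : min (0:ℝ) (6*t-3) = 6*t-3 := min_eq_right hu
  have hT : Tf (6*t-3) = 1/2 := max_eq_left (by linarith)
  simp only [Xcfg, Set.mem_setOf_eq]
  refine ⟨fun k => ?_, fun k => ?_, pairwise_disj _ ?_ ?_ ?_ ?_ ?_ ?_,
    ⟨?_, ?_⟩, ⟨?_, ?_⟩, ?_, ?_⟩
  · fin_cases k <;> norm_num [Fin.ext_iff, Fin.val_zero, Fin.val_one, fv2, fv3, cfgOf, hE, etaMid, Ib, Jb, Lmap, lerp, habs, hm, hT] <;>
      and_intros <;> nlinarith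
  · fin_cases k <;> norm_num [Fin.ext_iff, Fin.val_zero, Fin.val_one, fv2, fv3, cfgOf, hE, etaMid, Ib, Jb, Lmap, lerp, habs, hm, hT] <;>
      and_intros <;> nlinarith
  · apply disj_sep; right; left
    norm_num [Fin.ext_iff, Fin.val_zero, Fin.val_one, fv2, fv3, cfgOf, hE, etaMid, Ib, Jb, Lmap, lerp, habs, hm, hT]
    nlinarith [mul_nonneg hx0 (by linarith : (0:ℝ) ≤ 2-4*t)]
  · apply disj_sep; right; left
    norm_num [Fin.ext_iff, Fin.val_zero, Fin.val_one, fv2, fv3, cfgOf, hE, etaMid, Ib, Jb, Lmap, lerp, habs, hm, hT]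
    nlinarith [mul_nonneg hx0 (by linarith : (0:ℝ) ≤ 5-2*t)]
  · apply disj_sep; right; left
    norm_num [Fin.ext_iff, Fin.val_zero, Fin.val_one, fv2, fv3, cfgOf, hE, etaMid, Ib, Jb, Lmap, lerp, habs, hm, hT]
    nlinarith [mul_nonneg hx0 (by linarith : (0:ℝ) ≤ 5-2*t)]
  · rcases h1 with hst|hst
    · apply disj_sep; right; right; right
      norm_num [Fin.ext_iff, Fin.val_zero, Fin.val_one, fv2, fv3, cfgOf, hE, etaMid, Ib, Jb, Lmap, lerp, habs, hm, hT, hst]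
    · apply disj_sep; right; left
      norm_num [Fin.ext_iff, Fin.val_zero, Fin.val_one, fv2, fv3, cfgOf, hE, etaMid, Ib, Jb, Lmap, lerp, habs, hm, hT, hst]
      nlinarith
  · apply disj_sep; right; left
    norm_num [Fin.ext_iff, Fin.val_zero, Fin.val_one, fv2, fv3, cfgOf, hE, etaMid, Ib, Jb, Lmap, lerp, habs, hm, hT]
    nlinarith [hoxeq, mul_nonneg hx0 (by linarith : (0:ℝ) ≤ 5+2*t-4*σo)]
  · apply disj_sep; right; right; left
    norm_num [Fin.ext_iff, Fin.val_zero, Fin.val_one, fv2, fv3, cfgOf, hE, etaMid, Ib, Jb, Lmap, lerp, habs, hm, hT]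
  all_goals norm_num [Fin.ext_iff, Fin.val_zero, Fin.val_one, fv2, fv3, cfgOf, hE, etaMid, Ib, Jb, Lmap, lerp, habs, hm, hT] <;> nlinarith

set_option maxHeartbeats 1000000 in
lemma memB4 {t σx σy σo : ℝ}
    (ht1 : -1 ≤ t) (ht2 : t ≤ 1)
    (hx0 : 0 ≤ σx) (hx1 : σx ≤ 1) (hy0 : 0 ≤ σy) (hy1 : σy ≤ 1)
    (ho0 : 0 ≤ σo) (ho1 : σo ≤ 1)
    (h1 : σy = 0 ∨ σx = 1) (h2 : σo = 0 ∨ σy = 1)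
    (h0 : 0 ≤ t) (hr1 : 1/3 < t) (hr2 : t ≤ 2/3) (hu : 0 < 6*t-3) :
    cfgOf t σx σy σo ∈ Xcfg := by
  have hoxeq : σo * σx = σo := by
    rcases h2 with h2'|h2'
    · rw [h2']; ring
    · rcases h1 with h1'|h1'
      · rw [h1'] at h2'; norm_num at h2'
      · rw [h1']; ring
  have habs : |2*t| = 2*t := abs_of_nonneg (by linarith)
  have hE := etaP_mid_pos h0 (by linarith) hr2
  have hm : min (0:ℝ) (6*t-3) = 0 := min_eq_left (by linarith)
  have hT : Tf (6*t-3) = (1+(6*t-3))/2 := max_eq_right (by linarith)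
  simp only [Xcfg, Set.mem_setOf_eq]
  refine ⟨fun k => ?_, fun k => ?_, pairwise_disj _ ?_ ?_ ?_ ?_ ?_ ?_,
    ⟨?_, ?_⟩, ⟨?_, ?_⟩, ?_, ?_⟩
  · fin_cases k <;> norm_num [Fin.ext_iff, Fin.val_zero, Fin.val_one, fv2, fv3, cfgOf, hE, etaMid, Ib, Jb, Lmap, lerp, habs, hm, hT] <;>
      and_intros <;> nlinarith
  · fin_cases k <;> norm_num [Fin.ext_iff, Fin.val_zero, Fin.val_one, fv2, fv3, cfgOf, hE, etaMid, Ib, Jb, Lmap, lerp, habs, hm, hT] <;>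
      and_intros <;> nlinarith
  · apply disj_sep; right; right; left
    norm_num [Fin.ext_iff, Fin.val_zero, Fin.val_one, fv2, fv3, cfgOf, hE, etaMid, Ib, Jb, Lmap, lerp, habs, hm, hT]
    nlinarith [mul_nonneg hy0 (by linarith : (0:ℝ) ≤ 2*t-1)]
  · apply disj_sep; right; left
    norm_num [Fin.ext_iff, Fin.val_zero, Fin.val_one, fv2, fv3, cfgOf, hE, etaMid, Ib, Jb, Lmap, lerp, habs, hm, hT]
    nlinarith [mul_nonneg hx0 (by linarith : (0:ℝ) ≤ 5-2*t)]
  · apply disj_sep; right; left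
    norm_num [Fin.ext_iff, Fin.val_zero, Fin.val_one, fv2, fv3, cfgOf, hE, etaMid, Ib, Jb, Lmap, lerp, habs, hm, hT]
    nlinarith [mul_nonneg (by linarith : (0:ℝ) ≤ 1-σo) (by linarith : (0:ℝ) ≤ 2-3*t),
      mul_nonneg hx0 (by linarith : (0:ℝ) ≤ 5-2*t)]
  · apply disj_sep; right; right; right
    norm_num [Fin.ext_iff, Fin.val_zero, Fin.val_one, fv2, fv3, cfgOf, hE, etaMid, Ib, Jb, Lmap, lerp, habs, hm, hT]
    nlinarith [mul_nonneg hy0 (by linarith : (0:ℝ) ≤ 2*t-1)]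
  · rcases h2 with hst|hst
    · apply disj_sep; right; left
      norm_num [Fin.ext_iff, Fin.val_zero, Fin.val_one, fv2, fv3, cfgOf, hE, etaMid, Ib, Jb, Lmap, lerp, habs, hm, hT, hst]
      nlinarith [mul_nonneg hx0 (by linarith : (0:ℝ) ≤ 17-22*t)]
    · have hsx : σx = 1 := by
        rcases h1 with h'|h'
        · rw [h'] at hst; norm_num at hst
        · exact h'
      apply disj_sep; right; left
      norm_num [Fin.ext_iff, Fin.val_zero, Fin.val_one, fv2, fv3, cfgOf, hE, etaMid, Ib, Jb, Lmap, lerp, habs, hm, hT, hsx]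
      nlinarith [mul_nonneg (by linarith : (0:ℝ) ≤ 1-σo) (by linarith : (0:ℝ) ≤ 2-3*t)]
  · apply disj_sep; right; right; left
    norm_num [Fin.ext_iff, Fin.val_zero, Fin.val_one, fv2, fv3, cfgOf, hE, etaMid, Ib, Jb, Lmap, lerp, habs, hm, hT]
  all_goals norm_num [Fin.ext_iff, Fin.val_zero, Fin.val_one, fv2, fv3, cfgOf, hE, etaMid, Ib, Jb, Lmap, lerp, habs, hm, hT] <;> nlinarith

set_option maxHeartbeats 1000000 in
lemma memB5 {t σx σy σo : ℝ}
    (ht1 : -1 ≤ t) (ht2 : t ≤ 1)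
    (hx0 : 0 ≤ σx) (hx1 : σx ≤ 1) (hy0 : 0 ≤ σy) (hy1 : σy ≤ 1)
    (ho0 : 0 ≤ σo) (ho1 : σo ≤ 1)
    (h1 : σy = 0 ∨ σx = 1) (h2 : σo = 0 ∨ σy = 1)
    (h0 : 0 ≤ t) (hr2 : 2/3 < t) :
    cfgOf t σx σy σo ∈ Xcfg := by
  have hoxeq : σo * σx = σo := by
    rcases h2 with h2'|h2'
    · rw [h2']; ring
    · rcases h1 with h1'|h1'
      · rw [h1'] at h2'; norm_num at h2'
      · rw [h1']; ring
  have habs : |2*t| = 2*t := abs_of_nonneg (by linarith)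
  have hE := etaP_out_pos h0 (by linarith)
  simp only [Xcfg, Set.mem_setOf_eq]
  refine ⟨fun k => ?_, fun k => ?_, pairwise_disj _ ?_ ?_ ?_ ?_ ?_ ?_,
    ⟨?_, ?_⟩, ⟨?_, ?_⟩, ?_, ?_⟩
  · fin_cases k <;> norm_num [Fin.ext_iff, Fin.val_zero, Fin.val_one, fv2, fv3, cfgOf, hE, etaOut, Jb, Lmap, lerp, habs] <;>
      and_intros <;> nlinarith
  · fin_cases k <;> norm_num [Fin.ext_iff, Fin.val_zero, Fin.val_one, fv2, fv3, cfgOf, hE, etaOut, Jb, Lmap, lerp, habs] <;>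
      and_intros <;> nlinarith
  · apply disj_sep; right; right; left
    norm_num [Fin.ext_iff, Fin.val_zero, Fin.val_one, fv2, fv3, cfgOf, hE, etaOut, Jb, Lmap, lerp, habs]
    nlinarith [mul_nonneg hy0 (by linarith : (0:ℝ) ≤ 2*t-1)]
  · apply disj_sep; right; left
    norm_num [Fin.ext_iff, Fin.val_zero, Fin.val_one, fv2, fv3, cfgOf, hE, etaOut, Jb, Lmap, lerp, habs]
    nlinarith [mul_nonneg hx0 (by linarith : (0:ℝ) ≤ 5-2*t)]
  · apply disj_sep; right; left
    norm_num [Fin.ext_iff, Fin.val_zero, Fin.val_one, fv2, fv3, cfgOf, hE, etaOut, Jb, Lmap, lerp, habs]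
    nlinarith [mul_nonneg hx0 (by linarith : (0:ℝ) ≤ 5-2*t)]
  · apply disj_sep; right; left
    norm_num [Fin.ext_iff, Fin.val_zero, Fin.val_one, fv2, fv3, cfgOf, hE, etaOut, Jb, Lmap, lerp, habs]
    nlinarith [mul_nonneg hx0 (by linarith : (0:ℝ) ≤ 1+2*t)]
  · apply disj_sep; right; left
    norm_num [Fin.ext_iff, Fin.val_zero, Fin.val_one, fv2, fv3, cfgOf, hE, etaOut, Jb, Lmap, lerp, habs]
    nlinarith [mul_nonneg hx0 (by linarith : (0:ℝ) ≤ 1+2*t)]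
  · apply disj_sep; right; right; left
    norm_num [Fin.ext_iff, Fin.val_zero, Fin.val_one, fv2, fv3, cfgOf, hE, etaOut, Jb, Lmap, lerp, habs]
  all_goals norm_num [Fin.ext_iff, Fin.val_zero, Fin.val_one, fv2, fv3, cfgOf, hE, etaOut, Jb, Lmap, lerp, habs] <;> nlinarith

set_option maxHeartbeats 1000000 in
lemma memB6 {t σx σy σo : ℝ}
    (ht1 : -1 ≤ t) (ht2 : t ≤ 1)
    (hx0 : 0 ≤ σx) (hx1 : σx ≤ 1) (hy0 : 0 ≤ σy) (hy1 : σy ≤ 1)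
    (ho0 : 0 ≤ σo) (ho1 : σo ≤ 1)
    (h1 : σy = 0 ∨ σx = 1) (h2 : σo = 0 ∨ σy = 1)
    (h0 : t < 0) (hr1 : -t ≤ 1/3) (hu : 6*(-t)-1 ≤ 0) :
    cfgOf t σx σy σo ∈ Xcfg := by
  have hoxeq : σo * σx = σo := by
    rcases h2 with h2'|h2'
    · rw [h2']; ring
    · rcases h1 with h1'|h1'
      · rw [h1'] at h2'; norm_num at h2'
      · rw [h1']; ring
  have habs : |2*t| = -(2*t) := abs_of_nonpos (by linarith)
  have hE := etaP_in_neg h0 hr1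
  have hm : min (0:ℝ) (6*(-t)-1) = 6*(-t)-1 := min_eq_right hu
  have hT : Tf (6*(-t)-1) = 1/2 := max_eq_left (by linarith)
  have hm2 : min (0:ℝ) (-(6*t)-1) = -(6*t)-1 := min_eq_right (by linarith)
  have hT2 : Tf (-(6*t)-1) = 1/2 := max_eq_left (by linarith)
  simp only [Xcfg, Set.mem_setOf_eq]
  refine ⟨fun k => ?_, fun k => ?_, pairwise_disj _ ?_ ?_ ?_ ?_ ?_ ?_,
    ⟨?_, ?_⟩, ⟨?_, ?_⟩, ?_, ?_⟩
  · fin_cases k <;> norm_num [Fin.ext_iff, Fin.val_zero, Fin.val_one, fv2, fv3, cfgOf, hE, etaIn, Ib, Jb, Lmap, lerp, habs, hm, hT, hm2, hT2] <;>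
      and_intros <;> nlinarith
  · fin_cases k <;> norm_num [Fin.ext_iff, Fin.val_zero, Fin.val_one, fv2, fv3, cfgOf, hE, etaIn, Ib, Jb, Lmap, lerp, habs, hm, hT, hm2, hT2] <;>
      and_intros <;> nlinarith
  · apply disj_sep; right; left
    norm_num [Fin.ext_iff, Fin.val_zero, Fin.val_one, fv2, fv3, cfgOf, hE, etaIn, Ib, Jb, Lmap, lerp, habs, hm, hT, hm2, hT2]
    nlinarith [mul_nonneg hx0 (by linarith : (0:ℝ) ≤ 2+4*t)]
  · apply disj_sep; right; left
    norm_num [Fin.ext_iff, Fin.val_zero, Fin.val_one, fv2, fv3, cfgOf, hE, etaIn, Ib, Jb, Lmap, lerp, habs, hm, hT, hm2, hT2]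
    nlinarith [mul_nonneg hx0 (by linarith : (0:ℝ) ≤ 5+2*t)]
  · apply disj_sep; right; left
    norm_num [Fin.ext_iff, Fin.val_zero, Fin.val_one, fv2, fv3, cfgOf, hE, etaIn, Ib, Jb, Lmap, lerp, habs, hm, hT, hm2, hT2]
    nlinarith [mul_nonneg hx0 (by linarith : (0:ℝ) ≤ 5+2*t)]
  · apply disj_sep; right; left
    norm_num [Fin.ext_iff, Fin.val_zero, Fin.val_one, fv2, fv3, cfgOf, hE, etaIn, Ib, Jb, Lmap, lerp, habs, hm, hT, hm2, hT2]
    nlinarith [hoxeq, mul_nonneg hx0 (by linarith : (0:ℝ) ≤ 5-2*t-4*σo)]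
  · apply disj_sep; right; left
    norm_num [Fin.ext_iff, Fin.val_zero, Fin.val_one, fv2, fv3, cfgOf, hE, etaIn, Ib, Jb, Lmap, lerp, habs, hm, hT, hm2, hT2]
    nlinarith [hoxeq, mul_nonneg hx0 (by linarith : (0:ℝ) ≤ 5-2*t-4*σo)]
  · apply disj_sep; right; right; left
    norm_num [Fin.ext_iff, Fin.val_zero, Fin.val_one, fv2, fv3, cfgOf, hE, etaIn, Ib, Jb, Lmap, lerp, habs, hm, hT, hm2, hT2]
  all_goals norm_num [Fin.ext_iff, Fin.val_zero, Fin.val_one, fv2, fv3, cfgOf, hE, etaIn, Ib, Jb, Lmap, lerp, habs, hm, hT, hm2, hT2] <;> nlinarith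

set_option maxHeartbeats 1000000 in
lemma memB7 {t σx σy σo : ℝ}
    (ht1 : -1 ≤ t) (ht2 : t ≤ 1)
    (hx0 : 0 ≤ σx) (hx1 : σx ≤ 1) (hy0 : 0 ≤ σy) (hy1 : σy ≤ 1)
    (ho0 : 0 ≤ σo) (ho1 : σo ≤ 1)
    (h1 : σy = 0 ∨ σx = 1) (h2 : σo = 0 ∨ σy = 1)
    (h0 : t < 0) (hr1 : -t ≤ 1/3) (hu : 0 < 6*(-t)-1) :
    cfgOf t σx σy σo ∈ Xcfg := by
  have hoxeq : σo * σx = σo := by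
    rcases h2 with h2'|h2'
    · rw [h2']; ring
    · rcases h1 with h1'|h1'
      · rw [h1'] at h2'; norm_num at h2'
      · rw [h1']; ring
  have habs : |2*t| = -(2*t) := abs_of_nonpos (by linarith)
  have hE := etaP_in_neg h0 hr1
  have hm : min (0:ℝ) (6*(-t)-1) = 0 := min_eq_left (by linarith)
  have hT : Tf (6*(-t)-1) = (1+(6*(-t)-1))/2 := max_eq_right (by linarith)
  have hm2 : min (0:ℝ) (-(6*t)-1) = 0 := min_eq_left (by linarith)
  have hT2 : Tf (-(6*t)-1) = (1+(-(6*t)-1))/2 := max_eq_right (by linarith)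
  simp only [Xcfg, Set.mem_setOf_eq]
  refine ⟨fun k => ?_, fun k => ?_, pairwise_disj _ ?_ ?_ ?_ ?_ ?_ ?_,
    ⟨?_, ?_⟩, ⟨?_, ?_⟩, ?_, ?_⟩
  · fin_cases k <;> norm_num [Fin.ext_iff, Fin.val_zero, Fin.val_one, fv2, fv3, cfgOf, hE, etaIn, Ib, Jb, Lmap, lerp, habs, hm, hT, hm2, hT2] <;>
      and_intros <;> nlinarith
  · fin_cases k <;> norm_num [Fin.ext_iff, Fin.val_zero, Fin.val_one, fv2, fv3, cfgOf, hE, etaIn, Ib, Jb, Lmap, lerp, habs, hm, hT, hm2, hT2] <;>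
      and_intros <;> nlinarith
  · apply disj_sep; right; left
    norm_num [Fin.ext_iff, Fin.val_zero, Fin.val_one, fv2, fv3, cfgOf, hE, etaIn, Ib, Jb, Lmap, lerp, habs, hm, hT, hm2, hT2]
    nlinarith [mul_nonneg hx0 (by linarith : (0:ℝ) ≤ 2+4*t)]
  · apply disj_sep; right; left
    norm_num [Fin.ext_iff, Fin.val_zero, Fin.val_one, fv2, fv3, cfgOf, hE, etaIn, Ib, Jb, Lmap, lerp, habs, hm, hT, hm2, hT2]
    nlinarith [mul_nonneg hx0 (by linarith : (0:ℝ) ≤ 5+2*t)]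
  · apply disj_sep; right; left
    norm_num [Fin.ext_iff, Fin.val_zero, Fin.val_one, fv2, fv3, cfgOf, hE, etaIn, Ib, Jb, Lmap, lerp, habs, hm, hT, hm2, hT2]
    nlinarith [mul_nonneg (by linarith : (0:ℝ) ≤ 1-σo) (by linarith : (0:ℝ) ≤ 1+3*t),
      mul_nonneg hx0 (by linarith : (0:ℝ) ≤ 5+2*t)]
  · apply disj_sep; right; left
    norm_num [Fin.ext_iff, Fin.val_zero, Fin.val_one, fv2, fv3, cfgOf, hE, etaIn, Ib, Jb, Lmap, lerp, habs, hm, hT, hm2, hT2]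
    nlinarith [hoxeq, mul_nonneg hx0 (by linarith : (0:ℝ) ≤ 5-2*t-4*σo)]
  · rcases h1 with hst|hst
    · apply disj_sep; right; right; left
      norm_num [Fin.ext_iff, Fin.val_zero, Fin.val_one, fv2, fv3, cfgOf, hE, etaIn, Ib, Jb, Lmap, lerp, habs, hm, hT, hm2, hT2, hst]
    · apply disj_sep; right; left
      norm_num [Fin.ext_iff, Fin.val_zero, Fin.val_one, fv2, fv3, cfgOf, hE, etaIn, Ib, Jb, Lmap, lerp, habs, hm, hT, hm2, hT2, hst]
      nlinarith [mul_nonneg (by linarith : (0:ℝ) ≤ 1-σo) (by linarith : (0:ℝ) ≤ 1+3*t)]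
  · apply disj_sep; right; right; left
    norm_num [Fin.ext_iff, Fin.val_zero, Fin.val_one, fv2, fv3, cfgOf, hE, etaIn, Ib, Jb, Lmap, lerp, habs, hm, hT, hm2, hT2]
  all_goals norm_num [Fin.ext_iff, Fin.val_zero, Fin.val_one, fv2, fv3, cfgOf, hE, etaIn, Ib, Jb, Lmap, lerp, habs, hm, hT, hm2, hT2] <;> nlinarith

set_option maxHeartbeats 1000000 in
lemma memB8 {t σx σy σo : ℝ}
    (ht1 : -1 ≤ t) (ht2 : t ≤ 1)
    (hx0 : 0 ≤ σx) (hx1 : σx ≤ 1) (hy0 : 0 ≤ σy) (hy1 : σy ≤ 1)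
    (ho0 : 0 ≤ σo) (ho1 : σo ≤ 1)
    (h1 : σy = 0 ∨ σx = 1) (h2 : σo = 0 ∨ σy = 1)
    (h0 : t < 0) (hr1 : 1/3 < -t) (hr2 : -t ≤ 2/3) (hu : 6*(-t)-3 ≤ 0) :
    cfgOf t σx σy σo ∈ Xcfg := by
  have hoxeq : σo * σx = σo := by
    rcases h2 with h2'|h2'
    · rw [h2']; ring
    · rcases h1 with h1'|h1'
      · rw [h1'] at h2'; norm_num at h2'
      · rw [h1']; ring
  have habs : |2*t| = -(2*t) := abs_of_nonpos (by linarith)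
  have hE := etaP_mid_neg h0 (by linarith) hr2
  have hm : min (0:ℝ) (6*(-t)-3) = 6*(-t)-3 := min_eq_right hu
  have hT : Tf (6*(-t)-3) = 1/2 := max_eq_left (by linarith)
  have hm2 : min (0:ℝ) (-(6*t)-3) = -(6*t)-3 := min_eq_right (by linarith)
  have hT2 : Tf (-(6*t)-3) = 1/2 := max_eq_left (by linarith)
  simp only [Xcfg, Set.mem_setOf_eq]
  refine ⟨fun k => ?_, fun k => ?_, pairwise_disj _ ?_ ?_ ?_ ?_ ?_ ?_,
    ⟨?_, ?_⟩, ⟨?_, ?_⟩, ?_, ?_⟩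
  · fin_cases k <;> norm_num [Fin.ext_iff, Fin.val_zero, Fin.val_one, fv2, fv3, cfgOf, hE, etaMid, Ib, Jb, Lmap, lerp, habs, hm, hT, hm2, hT2] <;>
      and_intros <;> nlinarith
  · fin_cases k <;> norm_num [Fin.ext_iff, Fin.val_zero, Fin.val_one, fv2, fv3, cfgOf, hE, etaMid, Ib, Jb, Lmap, lerp, habs, hm, hT, hm2, hT2] <;>
      and_intros <;> nlinarith
  · apply disj_sep; right; left
    norm_num [Fin.ext_iff, Fin.val_zero, Fin.val_one, fv2, fv3, cfgOf, hE, etaMid, Ib, Jb, Lmap, lerp, habs, hm, hT, hm2, hT2]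
    nlinarith [mul_nonneg hx0 (by linarith : (0:ℝ) ≤ 2+4*t)]
  · apply disj_sep; right; left
    norm_num [Fin.ext_iff, Fin.val_zero, Fin.val_one, fv2, fv3, cfgOf, hE, etaMid, Ib, Jb, Lmap, lerp, habs, hm, hT, hm2, hT2]
    nlinarith [mul_nonneg hx0 (by linarith : (0:ℝ) ≤ 5+2*t)]
  · apply disj_sep; right; left
    norm_num [Fin.ext_iff, Fin.val_zero, Fin.val_one, fv2, fv3, cfgOf, hE, etaMid, Ib, Jb, Lmap, lerp, habs, hm, hT, hm2, hT2]
    nlinarith [mul_nonneg hx0 (by linarith : (0:ℝ) ≤ 5+2*t)]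
  · apply disj_sep; right; left
    norm_num [Fin.ext_iff, Fin.val_zero, Fin.val_one, fv2, fv3, cfgOf, hE, etaMid, Ib, Jb, Lmap, lerp, habs, hm, hT, hm2, hT2]
    nlinarith [hoxeq, mul_nonneg hx0 (by linarith : (0:ℝ) ≤ 5-2*t-4*σo)]
  · rcases h1 with hst|hst
    · apply disj_sep; right; right; left
      norm_num [Fin.ext_iff, Fin.val_zero, Fin.val_one, fv2, fv3, cfgOf, hE, etaMid, Ib, Jb, Lmap, lerp, habs, hm, hT, hm2, hT2, hst]
    · apply disj_sep; right; left
      norm_num [Fin.ext_iff, Fin.val_zero, Fin.val_one, fv2, fv3, cfgOf, hE, etaMid, Ib, Jb, Lmap, lerp, habs, hm, hT, hm2, hT2, hst]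
      nlinarith
  · apply disj_sep; right; right; left
    norm_num [Fin.ext_iff, Fin.val_zero, Fin.val_one, fv2, fv3, cfgOf, hE, etaMid, Ib, Jb, Lmap, lerp, habs, hm, hT, hm2, hT2]
  all_goals norm_num [Fin.ext_iff, Fin.val_zero, Fin.val_one, fv2, fv3, cfgOf, hE, etaMid, Ib, Jb, Lmap, lerp, habs, hm, hT, hm2, hT2] <;> nlinarith

set_option maxHeartbeats 1000000 in
lemma memB9 {t σx σy σo : ℝ}
    (ht1 : -1 ≤ t) (ht2 : t ≤ 1)
    (hx0 : 0 ≤ σx) (hx1 : σx ≤ 1) (hy0 : 0 ≤ σy) (hy1 : σy ≤ 1)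
    (ho0 : 0 ≤ σo) (ho1 : σo ≤ 1)
    (h1 : σy = 0 ∨ σx = 1) (h2 : σo = 0 ∨ σy = 1)
    (h0 : t < 0) (hr1 : 1/3 < -t) (hr2 : -t ≤ 2/3) (hu : 0 < 6*(-t)-3) :
    cfgOf t σx σy σo ∈ Xcfg := by
  have hoxeq : σo * σx = σo := by
    rcases h2 with h2'|h2'
    · rw [h2']; ring
    · rcases h1 with h1'|h1'
      · rw [h1'] at h2'; norm_num at h2'
      · rw [h1']; ring
  have habs : |2*t| = -(2*t) := abs_of_nonpos (by linarith)
  have hE := etaP_mid_neg h0 (by linarith) hr2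
  have hm : min (0:ℝ) (6*(-t)-3) = 0 := min_eq_left (by linarith)
  have hT : Tf (6*(-t)-3) = (1+(6*(-t)-3))/2 := max_eq_right (by linarith)
  have hm2 : min (0:ℝ) (-(6*t)-3) = 0 := min_eq_left (by linarith)
  have hT2 : Tf (-(6*t)-3) = (1+(-(6*t)-3))/2 := max_eq_right (by linarith)
  simp only [Xcfg, Set.mem_setOf_eq]
  refine ⟨fun k => ?_, fun k => ?_, pairwise_disj _ ?_ ?_ ?_ ?_ ?_ ?_,
    ⟨?_, ?_⟩, ⟨?_, ?_⟩, ?_, ?_⟩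
  · fin_cases k <;> norm_num [Fin.ext_iff, Fin.val_zero, Fin.val_one, fv2, fv3, cfgOf, hE, etaMid, Ib, Jb, Lmap, lerp, habs, hm, hT, hm2, hT2] <;>
      and_intros <;> nlinarith
  · fin_cases k <;> norm_num [Fin.ext_iff, Fin.val_zero, Fin.val_one, fv2, fv3, cfgOf, hE, etaMid, Ib, Jb, Lmap, lerp, habs, hm, hT, hm2, hT2] <;>
      and_intros <;> nlinarith
  · apply disj_sep; right; right; right
    norm_num [Fin.ext_iff, Fin.val_zero, Fin.val_one, fv2, fv3, cfgOf, hE, etaMid, Ib, Jb, Lmap, lerp, habs, hm, hT, hm2, hT2]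
    nlinarith [mul_nonneg hy0 (by linarith : (0:ℝ) ≤ -1-2*t)]
  · apply disj_sep; right; left
    norm_num [Fin.ext_iff, Fin.val_zero, Fin.val_one, fv2, fv3, cfgOf, hE, etaMid, Ib, Jb, Lmap, lerp, habs, hm, hT, hm2, hT2]
    nlinarith [mul_nonneg (by linarith : (0:ℝ) ≤ 1-σo) (by linarith : (0:ℝ) ≤ 4+6*t),
      mul_nonneg hx0 (by linarith : (0:ℝ) ≤ 5+2*t)]
  · apply disj_sep; right; left
    norm_num [Fin.ext_iff, Fin.val_zero, Fin.val_one, fv2, fv3, cfgOf, hE, etaMid, Ib, Jb, Lmap, lerp, habs, hm, hT, hm2, hT2]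
    nlinarith [mul_nonneg hx0 (by linarith : (0:ℝ) ≤ 5+2*t)]
  · rcases h2 with hst|hst
    · apply disj_sep; right; left
      norm_num [Fin.ext_iff, Fin.val_zero, Fin.val_one, fv2, fv3, cfgOf, hE, etaMid, Ib, Jb, Lmap, lerp, habs, hm, hT, hm2, hT2, hst]
      nlinarith [mul_nonneg hx0 (by linarith : (0:ℝ) ≤ 17+22*t)]
    · have hsx : σx = 1 := by
        rcases h1 with h'|h'
        · rw [h'] at hst; norm_num at hst
        · exact h'
      apply disj_sep; right; left
      norm_num [Fin.ext_iff, Fin.val_zero, Fin.val_one, fv2, fv3, cfgOf, hE, etaMid, Ib, Jb, Lmap, lerp, habs, hm, hT, hm2, hT2, hsx]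
      nlinarith [mul_nonneg (by linarith : (0:ℝ) ≤ 1-σo) (by linarith : (0:ℝ) ≤ 4+6*t)]
  · apply disj_sep; right; right; left
    norm_num [Fin.ext_iff, Fin.val_zero, Fin.val_one, fv2, fv3, cfgOf, hE, etaMid, Ib, Jb, Lmap, lerp, habs, hm, hT, hm2, hT2]
    nlinarith [mul_nonneg hy0 (by linarith : (0:ℝ) ≤ -1-2*t)]
  · apply disj_sep; right; right; left
    norm_num [Fin.ext_iff, Fin.val_zero, Fin.val_one, fv2, fv3, cfgOf, hE, etaMid, Ib, Jb, Lmap, lerp, habs, hm, hT, hm2, hT2]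
  all_goals norm_num [Fin.ext_iff, Fin.val_zero, Fin.val_one, fv2, fv3, cfgOf, hE, etaMid, Ib, Jb, Lmap, lerp, habs, hm, hT, hm2, hT2] <;> nlinarith

set_option maxHeartbeats 1000000 in
lemma memB10 {t σx σy σo : ℝ}
    (ht1 : -1 ≤ t) (ht2 : t ≤ 1)
    (hx0 : 0 ≤ σx) (hx1 : σx ≤ 1) (hy0 : 0 ≤ σy) (hy1 : σy ≤ 1)
    (ho0 : 0 ≤ σo) (ho1 : σo ≤ 1)
    (h1 : σy = 0 ∨ σx = 1) (h2 : σo = 0 ∨ σy = 1)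
    (h0 : t < 0) (hr2 : 2/3 < -t) :
    cfgOf t σx σy σo ∈ Xcfg := by
  have hoxeq : σo * σx = σo := by
    rcases h2 with h2'|h2'
    · rw [h2']; ring
    · rcases h1 with h1'|h1'
      · rw [h1'] at h2'; norm_num at h2'
      · rw [h1']; ring
  have habs : |2*t| = -(2*t) := abs_of_nonpos (by linarith)
  have hE := etaP_out_neg h0 (by linarith)
  simp only [Xcfg, Set.mem_setOf_eq]
  refine ⟨fun k => ?_, fun k => ?_, pairwise_disj _ ?_ ?_ ?_ ?_ ?_ ?_,
    ⟨?_, ?_⟩, ⟨?_, ?_⟩, ?_, ?_⟩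
  · fin_cases k <;> norm_num [Fin.ext_iff, Fin.val_zero, Fin.val_one, fv2, fv3, cfgOf, hE, etaOut, Jb, Lmap, lerp, habs] <;>
      and_intros <;> nlinarith
  · fin_cases k <;> norm_num [Fin.ext_iff, Fin.val_zero, Fin.val_one, fv2, fv3, cfgOf, hE, etaOut, Jb, Lmap, lerp, habs] <;>
      and_intros <;> nlinarith
  · apply disj_sep; right; right; right
    norm_num [Fin.ext_iff, Fin.val_zero, Fin.val_one, fv2, fv3, cfgOf, hE, etaOut, Jb, Lmap, lerp, habs]
    nlinarith [mul_nonneg hy0 (by linarith : (0:ℝ) ≤ -1-2*t)]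
  · apply disj_sep; right; left
    norm_num [Fin.ext_iff, Fin.val_zero, Fin.val_one, fv2, fv3, cfgOf, hE, etaOut, Jb, Lmap, lerp, habs]
    nlinarith [mul_nonneg hx0 (by linarith : (0:ℝ) ≤ 5+2*t)]
  · apply disj_sep; right; left
    norm_num [Fin.ext_iff, Fin.val_zero, Fin.val_one, fv2, fv3, cfgOf, hE, etaOut, Jb, Lmap, lerp, habs]
    nlinarith [mul_nonneg hx0 (by linarith : (0:ℝ) ≤ 5+2*t)]
  · apply disj_sep; right; left
    norm_num [Fin.ext_iff, Fin.val_zero, Fin.val_one, fv2, fv3, cfgOf, hE, etaOut, Jb, Lmap, lerp, habs]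
    nlinarith [mul_nonneg hx0 (by linarith : (0:ℝ) ≤ 1-2*t)]
  · apply disj_sep; right; left
    norm_num [Fin.ext_iff, Fin.val_zero, Fin.val_one, fv2, fv3, cfgOf, hE, etaOut, Jb, Lmap, lerp, habs]
    nlinarith [mul_nonneg hx0 (by linarith : (0:ℝ) ≤ 1-2*t)]
  · apply disj_sep; right; right; left
    norm_num [Fin.ext_iff, Fin.val_zero, Fin.val_one, fv2, fv3, cfgOf, hE, etaOut, Jb, Lmap, lerp, habs]
  all_goals norm_num [Fin.ext_iff, Fin.val_zero, Fin.val_one, fv2, fv3, cfgOf, hE, etaOut, Jb, Lmap, lerp, habs] <;> nlinarith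

lemma mem_core {t σx σy σo : ℝ} (ht1 : -1 ≤ t) (ht2 : t ≤ 1)
    (hx0 : 0 ≤ σx) (hx1 : σx ≤ 1) (hy0 : 0 ≤ σy) (hy1 : σy ≤ 1)
    (ho0 : 0 ≤ σo) (ho1 : σo ≤ 1)
    (h1 : σy = 0 ∨ σx = 1) (h2 : σo = 0 ∨ σy = 1) :
    cfgOf t σx σy σo ∈ Xcfg := by
  rcases le_or_gt 0 t with h0 | h0
  · rcases le_or_gt t (1/3) with hr1 | hr1
    · rcases le_or_gt (6*t-1) 0 with hu | hu
      · exact memB1 ht1 ht2 hx0 hx1 hy0 hy1 ho0 ho1 h1 h2 h0 hr1 hu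
      · exact memB2 ht1 ht2 hx0 hx1 hy0 hy1 ho0 ho1 h1 h2 h0 hr1 hu
    · rcases le_or_gt t (2/3) with hr2 | hr2
      · rcases le_or_gt (6*t-3) 0 with hu | hu
        · exact memB3 ht1 ht2 hx0 hx1 hy0 hy1 ho0 ho1 h1 h2 h0 hr1 hr2 hu
        · exact memB4 ht1 ht2 hx0 hx1 hy0 hy1 ho0 ho1 h1 h2 h0 hr1 hr2 hu
      · exact memB5 ht1 ht2 hx0 hx1 hy0 hy1 ho0 ho1 h1 h2 h0 hr2
  · rcases le_or_gt (-t) (1/3) with hr1 | hr1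
    · rcases le_or_gt (6*(-t)-1) 0 with hu | hu
      · exact memB6 ht1 ht2 hx0 hx1 hy0 hy1 ho0 ho1 h1 h2 h0 hr1 hu
      · exact memB7 ht1 ht2 hx0 hx1 hy0 hy1 ho0 ho1 h1 h2 h0 hr1 hu
    · rcases le_or_gt (-t) (2/3) with hr2 | hr2
      · rcases le_or_gt (6*(-t)-3) 0 with hu | hu
        · exact memB8 ht1 ht2 hx0 hx1 hy0 hy1 ho0 ho1 h1 h2 h0 hr1 hr2 hu
        · exact memB9 ht1 ht2 hx0 hx1 hy0 hy1 ho0 ho1 h1 h2 h0 hr1 hr2 hu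
      · exact memB10 ht1 ht2 hx0 hx1 hy0 hy1 ho0 ho1 h1 h2 h0 hr2

end Aux4

section Aux5
open Set

lemma sX_mem (s : ℝ) : 0 ≤ sX s ∧ sX s ≤ 1 := by
  rw [sX]; exact ⟨(clamp_mem _).1, (clamp_mem _).2⟩
lemma sY_mem (s : ℝ) : 0 ≤ sY s ∧ sY s ≤ 1 := by
  rw [sY]; exact ⟨(clamp_mem _).1, (clamp_mem _).2⟩
lemma sO_mem (s : ℝ) : 0 ≤ sO s ∧ sO s ≤ 1 := by
  rw [sO]; exact ⟨(clamp_mem _).1, (clamp_mem _).2⟩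

lemma Gam_mem {t : ℝ} (ht1 : -1 ≤ t) (ht2 : t ≤ 1) (s : ℝ) : Gam (t, s) ∈ Xcfg := by
  rw [Gam]
  exact mem_core ht1 ht2 (sX_mem s).1 (sX_mem s).2 (sY_mem s).1 (sY_mem s).2
    (sO_mem s).1 (sO_mem s).2 (stage1 s) (stage2 s)

noncomputable def Hmap (p : ℝ × ℝ) : Cfg :=
  if p.1 ≤ 0 then Gam (2*p.1+1, p.2) else swapC (Gam (2*p.1-1, p.2))

lemma cont_swapC : Continuous swapC :=
  continuous_pi fun k => continuous_apply _

lemma cont_Hmap : Continuous Hmap := by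
  unfold Hmap
  apply Continuous.if_le (f := fun p : ℝ × ℝ => p.1) (g := fun _ => (0:ℝ))
  · exact cont_Gam.comp (by fun_prop)
  · exact cont_swapC.comp (cont_Gam.comp (by fun_prop))
  · exact continuous_fst
  · exact continuous_const
  · intro p hp
    have e1 : (2*p.1+1, p.2) = ((1:ℝ), p.2) := by rw [hp]; norm_num
    have e2 : (2*p.1-1, p.2) = ((-1:ℝ), p.2) := by rw [hp]; norm_num
    rw [e1, e2, Gam_swap]

theorem stmt13' :
    (∃ Γ : ℝ × ℝ → Cfg,
      ContinuousOn Γ (Set.Icc (-1 : ℝ) 1 ×ˢ Set.Icc (-1 : ℝ) 1) ∧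
      (∀ p ∈ Set.Icc (-1 : ℝ) 1 ×ˢ Set.Icc (-1 : ℝ) 1, Γ p ∈ Xcfg) ∧
      (∀ t ∈ Set.Icc (-1 : ℝ) 1, Γ (t, -1) = etaP t ∧ Γ (t, 1) = Lmap t) ∧
      (∀ s ∈ Set.Icc (-1 : ℝ) 1, Γ (1, s) = swapC (Γ (-1, s)))) ∧
    (∃ H : ℝ × ℝ → Cfg,
      ContinuousOn H (Set.Icc (-1 : ℝ) 1 ×ˢ Set.Icc (-1 : ℝ) 1) ∧
      (∀ p ∈ Set.Icc (-1 : ℝ) 1 ×ˢ Set.Icc (-1 : ℝ) 1, H p ∈ Xcfg) ∧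
      (∀ t ∈ Set.Icc (-1 : ℝ) 1, H (t, -1) = concEta t ∧ H (t, 1) = concL t) ∧
      (∀ s ∈ Set.Icc (-1 : ℝ) 1, H (-1, s) = H (1, s))) := by
  constructor
  · refine ⟨Gam, cont_Gam.continuousOn, ?_, ?_, ?_⟩
    · intro p hp
      exact Gam_mem hp.1.1 hp.1.2 p.2
    · intro t _; exact ⟨Gam_bot t, Gam_top t⟩
    · intro s _; exact Gam_swap s
  · refine ⟨Hmap, cont_Hmap.continuousOn, ?_, ?_, ?_⟩
    · intro p hp
      obtain ⟨hp1, hp2⟩ := hp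
      rw [Hmap]
      split_ifs with h
      · exact Gam_mem (by have := hp1.1; linarith) (by linarith) p.2
      · exact swapC_mem (Gam_mem (by linarith) (by have := hp1.2; linarith) p.2)
    · intro t _
      constructor
      · simp only [Hmap, concEta]
        split_ifs with h <;> rw [Gam_bot]
      · simp only [Hmap, concL]
        split_ifs with h <;> rw [Gam_top]
    · intro s _
      simp only [Hmap]
      rw [if_pos (by norm_num : (-1:ℝ) ≤ 0), if_neg (by norm_num : ¬ ((1:ℝ) ≤ 0))]
      rw [show (2*(-1:ℝ)+1) = -1 by norm_num, show (2*(1:ℝ)-1) = 1 by norm_num,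
        Gam_swap, swapC_swapC]

end Aux5

/-- There is a continuous map `Γ : [-1,1] × [-1,1] → X` with
`Γ(t,-1) = η⁺₁(t)`, `Γ(t,1) = L(t)`, and `Γ(1,s) = swap(Γ(-1,s))` for all `s`.  In
particular, the loop obtained by concatenating `η⁺₁` with its closed-label swap is freely
homotopic in `X` to the loop obtained by concatenating `L` with its closed-label swap.
(The two-dimensional case of the lemma that `η_n` and `α_n(ℓ_n, μ_n)` are homologous.) -/
theorem stmt13 :
    (∃ Γ : ℝ × ℝ → Cfg,
      ContinuousOn Γ (Set.Icc (-1 : ℝ) 1 ×ˢ Set.Icc (-1 : ℝ) 1) ∧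
      (∀ p ∈ Set.Icc (-1 : ℝ) 1 ×ˢ Set.Icc (-1 : ℝ) 1, Γ p ∈ Xcfg) ∧
      (∀ t ∈ Set.Icc (-1 : ℝ) 1, Γ (t, -1) = etaP t ∧ Γ (t, 1) = Lmap t) ∧
      (∀ s ∈ Set.Icc (-1 : ℝ) 1, Γ (1, s) = swapC (Γ (-1, s)))) ∧
    (∃ H : ℝ × ℝ → Cfg,
      ContinuousOn H (Set.Icc (-1 : ℝ) 1 ×ˢ Set.Icc (-1 : ℝ) 1) ∧
      (∀ p ∈ Set.Icc (-1 : ℝ) 1 ×ˢ Set.Icc (-1 : ℝ) 1, H p ∈ Xcfg) ∧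
      (∀ t ∈ Set.Icc (-1 : ℝ) 1, H (t, -1) = concEta t ∧ H (t, 1) = concL t) ∧
      (∀ s ∈ Set.Icc (-1 : ℝ) 1, H (-1, s) = H (1, s))) := stmt13'
end

section
/- Let Y be the space of triples (C, O₋, O₊) of rectangles (products of two nondegenerate closed intervals) contained in [−1,1]², with pairwise disjoint interiors, such that the first interval of C is contained in [0,1] and the first intervals of O₋ and O₊ have left endpoint 0, topologized as a subspace of ℝ^12 via the interval endpoints. Then every loop in Y is null-homotopic, i.e., for every y ∈ Y the fundamental group of Y at y is trivial. (This is the vanishing H₁(SCvor₂(1,±)) = 0 used in the non-formality argument, where Y is the arity (1,2) component of Voronov's Swiss-Cheese operad SCvor₂.) -/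
/-- A triple of rectangles `(C, O₋, O₊)` in `ℝ²`, each recorded by the endpoints of its two
defining intervals: index `0` is `C`, `1` is `O₋`, `2` is `O₊`; the entry at each index is
`((a₀, b₀), (a₁, b₁))`, standing for `[a₀,b₀] × [a₁,b₁]`. -/
abbrev Cfg3 : Type := Fin 3 → (ℝ × ℝ) × (ℝ × ℝ)

/-- The space `Y` of triples `(C, O₋, O₊)` of rectangles (products of two nondegenerate
closed intervals) contained in `[-1,1]²`, with pairwise disjoint interiors, such that the
first interval of `C` is contained in `[0,1]` and the first intervals of `O₋` and `O₊` have
left endpoint `0`; it is topologized as a subspace of `ℝ^12` via the interval endpoints.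
This is the arity `(1, ±)` component of Voronov's Swiss-Cheese operad `SCvor₂`. -/
def Ycfg : Set Cfg3 :=
  {x | (∀ k, (x k).1.1 < (x k).1.2 ∧ (x k).2.1 < (x k).2.2) ∧
       (∀ k, -1 ≤ (x k).1.1 ∧ (x k).1.2 ≤ 1 ∧ -1 ≤ (x k).2.1 ∧ (x k).2.2 ≤ 1) ∧
       (∀ k l, k ≠ l → Disjoint (interior (rect (x k))) (interior (rect (x l)))) ∧
       (0 ≤ (x 0).1.1 ∧ (x 0).1.2 ≤ 1) ∧
       (x 1).1.1 = 0 ∧ (x 2).1.1 = 0}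



noncomputable section

/-- linear interpolation -/
def seg (s u v : ℝ) : ℝ := (1 - s) * u + s * v

lemma seg_zero (u v : ℝ) : seg 0 u v = u := by simp [seg]
lemma seg_one (u v : ℝ) : seg 1 u v = v := by simp [seg]
lemma seg_self (s u : ℝ) : seg s u u = u := by simp [seg]; ring

lemma seg_le_seg {s u v u' v' : ℝ} (hs0 : 0 ≤ s) (hs1 : s ≤ 1) (h1 : u ≤ u') (h2 : v ≤ v') :
    seg s u v ≤ seg s u' v' := by
  have h1' : 0 ≤ (1 - s) * (u' - u) := mul_nonneg (by linarith) (by linarith)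
  have h2' : 0 ≤ s * (v' - v) := mul_nonneg hs0 (by linarith)
  simp only [seg]; nlinarith

lemma seg_lt_seg {s u v u' v' : ℝ} (hs0 : 0 ≤ s) (hs1 : s ≤ 1) (h1 : u < u') (h2 : v < v') :
    seg s u v < seg s u' v' := by
  rcases eq_or_lt_of_le hs1 with rfl | hs
  · simpa [seg_one] using h2
  · have h1' : 0 < (1 - s) * (u' - u) := mul_pos (by linarith) (by linarith)
    have h2' : 0 ≤ s * (v' - v) := mul_nonneg hs0 (by linarith)
    simp only [seg]; nlinarith

lemma le_seg {s u v lo : ℝ} (hs0 : 0 ≤ s) (hs1 : s ≤ 1) (h1 : lo ≤ u) (h2 : lo ≤ v) :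
    lo ≤ seg s u v := by
  have := seg_le_seg (u := lo) (v := lo) (u' := u) (v' := v) hs0 hs1 h1 h2
  rwa [seg_self] at this

lemma seg_le {s u v hi : ℝ} (hs0 : 0 ≤ s) (hs1 : s ≤ 1) (h1 : u ≤ hi) (h2 : v ≤ hi) :
    seg s u v ≤ hi := by
  have := seg_le_seg (u := u) (v := v) (u' := hi) (v' := hi) hs0 hs1 h1 h2
  rwa [seg_self] at this

lemma interior_rect (r : (ℝ × ℝ) × (ℝ × ℝ)) :
    interior (rect r) = Set.Ioo r.1.1 r.1.2 ×ˢ Set.Ioo r.2.1 r.2.2 := by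
  rw [rect, interior_prod_eq, interior_Icc, interior_Icc]

lemma disjoint_rect_x {r r' : (ℝ × ℝ) × (ℝ × ℝ)} (h : r.1.2 ≤ r'.1.1) :
    Disjoint (interior (rect r)) (interior (rect r')) := by
  rw [interior_rect, interior_rect, Set.disjoint_left]
  rintro ⟨z1, z2⟩ ⟨hz1, -⟩ ⟨hz1', -⟩
  exact absurd (lt_of_lt_of_le hz1.2 (le_trans h (le_of_lt hz1'.1))) (lt_irrefl _)

lemma disjoint_rect_y {r r' : (ℝ × ℝ) × (ℝ × ℝ)} (h : r.2.2 ≤ r'.2.1) :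
    Disjoint (interior (rect r)) (interior (rect r')) := by
  rw [interior_rect, interior_rect, Set.disjoint_left]
  rintro ⟨z1, z2⟩ ⟨-, hz2⟩ ⟨-, hz2'⟩
  exact absurd (lt_of_lt_of_le hz2.2 (le_trans h (le_of_lt hz2'.1))) (lt_irrefl _)

/-- From disjointness of interiors and overlap in the x–direction, extract y–separation. -/
lemma y_sep {r r' : (ℝ × ℝ) × (ℝ × ℝ)}
    (hd : Disjoint (interior (rect r)) (interior (rect r')))
    (hr : r.2.1 < r.2.2) (hr' : r'.2.1 < r'.2.2)
    (hov : max r.1.1 r'.1.1 < min r.1.2 r'.1.2) :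
    r.2.2 ≤ r'.2.1 ∨ r'.2.2 ≤ r.2.1 := by
  by_contra hcon
  push_neg at hcon
  obtain ⟨h1, h2⟩ := hcon
  set px := (max r.1.1 r'.1.1 + min r.1.2 r'.1.2) / 2 with hpx
  set py := (max r.2.1 r'.2.1 + min r.2.2 r'.2.2) / 2 with hpy
  have hyov : max r.2.1 r'.2.1 < min r.2.2 r'.2.2 := by
    rcases max_cases r.2.1 r'.2.1 with ⟨he, -⟩ | ⟨he, -⟩ <;>
      rcases min_cases r.2.2 r'.2.2 with ⟨he', -⟩ | ⟨he', -⟩ <;> rw [he, he'] <;> linarith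
  have hmemx : max r.1.1 r'.1.1 < px ∧ px < min r.1.2 r'.1.2 := by constructor <;> (rw [hpx]; linarith)
  have hmemy : max r.2.1 r'.2.1 < py ∧ py < min r.2.2 r'.2.2 := by constructor <;> (rw [hpy]; linarith)
  have hmem : (px, py) ∈ interior (rect r) ∩ interior (rect r') := by
    rw [interior_rect, interior_rect]
    refine ⟨⟨⟨?_, ?_⟩, ?_, ?_⟩, ⟨?_, ?_⟩, ?_, ?_⟩ <;>
      [exact lt_of_le_of_lt (le_max_left _ _) hmemx.1;
       exact lt_of_lt_of_le hmemx.2 (min_le_left _ _);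
       exact lt_of_le_of_lt (le_max_left _ _) hmemy.1;
       exact lt_of_lt_of_le hmemy.2 (min_le_left _ _);
       exact lt_of_le_of_lt (le_max_right _ _) hmemx.1;
       exact lt_of_lt_of_le hmemx.2 (min_le_right _ _);
       exact lt_of_le_of_lt (le_max_right _ _) hmemy.1;
       exact lt_of_lt_of_le hmemy.2 (min_le_right _ _)]
  rw [Set.disjoint_iff_inter_eq_empty.mp hd] at hmem
  exact hmem

lemma fin3_tri : ∀ (i j k : Fin 3), i ≠ 0 → j ≠ 0 → i ≠ j → k = 0 ∨ k = i ∨ k = j := by decide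

lemma fin3_12 : ∀ i : Fin 3, i ≠ 0 → i = 1 ∨ i = 2 := by decide

end

noncomputable section

def ph1 (t : ℝ) : ℝ := min (3 * t) 1
def ph2 (t : ℝ) : ℝ := min (max (3 * t - 1) 0) 1
def ph3 (t : ℝ) : ℝ := max (3 * t - 2) 0

lemma ph1_mem {t : ℝ} (h0 : 0 ≤ t) (_h1 : t ≤ 1) : 0 ≤ ph1 t ∧ ph1 t ≤ 1 :=
  ⟨le_min (by linarith) one_pos.le, min_le_right _ _⟩
lemma ph2_mem {t : ℝ} (_h0 : 0 ≤ t) (_h1 : t ≤ 1) : 0 ≤ ph2 t ∧ ph2 t ≤ 1 :=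
  ⟨le_min (le_max_right _ _) one_pos.le, min_le_right _ _⟩
lemma ph3_mem {t : ℝ} (_h0 : 0 ≤ t) (h1 : t ≤ 1) : 0 ≤ ph3 t ∧ ph3 t ≤ 1 :=
  ⟨le_max_right _ _, max_le (by linarith) one_pos.le⟩
lemma ph3_pos {t : ℝ} (h : 0 < ph3 t) : ph1 t = 1 ∧ ph2 t = 1 := by
  have h2 : 2 < 3 * t := by
    by_contra hc
    push_neg at hc
    rw [ph3, max_eq_right (by linarith)] at h
    exact absurd h (lt_irrefl _)
  constructor
  · rw [ph1, min_eq_right (by linarith)]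
  · rw [ph2, max_eq_left (by linarith), min_eq_right (by linarith)]
lemma ph_zero : ph1 0 = 0 ∧ ph2 0 = 0 ∧ ph3 0 = 0 := by norm_num [ph1, ph2, ph3]
lemma ph_one : ph1 1 = 1 ∧ ph2 1 = 1 ∧ ph3 1 = 1 := by norm_num [ph1, ph2, ph3]

/-- The deformation: `i` is the lower open box, `j` the upper one. -/
def G (i j : Fin 3) (x : Cfg3) (t : ℝ) : Cfg3 := fun k =>
  if k = 0 then
    ((seg (ph1 t) (x 0).1.1 (seg (ph3 t) (max (x 0).1.1 (1 / 2)) (1 / 2)),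
      seg (ph1 t) (x 0).1.2 1),
     (seg (ph3 t) (x 0).2.1 (-1), seg (ph3 t) (x 0).2.2 1))
  else if k = i then
    (((x i).1.1, seg (ph2 t) (x i).1.2 (seg (ph3 t) (min (x i).1.2 (1 / 2)) (1 / 2))),
     (seg (ph3 t) (x i).2.1 (-1), seg (ph3 t) (x i).2.2 0))
  else
    (((x k).1.1, seg (ph2 t) (x k).1.2 (seg (ph3 t) (min (x k).1.2 (1 / 2)) (1 / 2))),
     (seg (ph3 t) (x k).2.1 0, seg (ph3 t) (x k).2.2 1))

lemma G_zero (i j : Fin 3) (x : Cfg3) : G i j x 0 = x := by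
  funext k
  simp only [G, ph_zero.1, ph_zero.2.1, ph_zero.2.2, seg_zero]
  split_ifs with h1 h2 <;> simp_all

def pt (i j : Fin 3) : Cfg3 := fun k =>
  if k = 0 then ((1 / 2, 1), (-1, 1))
  else if k = i then ((0, 1 / 2), (-1, 0))
  else ((0, 1 / 2), (0, 1))

lemma G_one (i j : Fin 3) (x : Cfg3) (hx1 : (x 1).1.1 = 0) (hx2 : (x 2).1.1 = 0)
    (hi : i ≠ 0) (hj : j ≠ 0) (hij : i ≠ j) : G i j x 1 = pt i j := by
  funext k
  simp only [G, pt, ph_one.1, ph_one.2.1, ph_one.2.2, seg_one]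
  rcases fin3_tri i j k hi hj hij with rfl | rfl | rfl
  · simp
  · rcases fin3_12 k hi with rfl | rfl <;> simp_all
  · rcases fin3_12 k hj with rfl | rfl <;> simp_all [Ne.symm hij]

lemma continuous_G (i j : Fin 3) : Continuous fun p : ℝ × Cfg3 => G i j p.2 p.1 := by
  apply continuous_pi
  intro k
  have hph1 : Continuous fun p : ℝ × Cfg3 => ph1 p.1 := by
    unfold ph1; fun_prop
  have hph2 : Continuous fun p : ℝ × Cfg3 => ph2 p.1 := by
    unfold ph2; fun_prop
  have hph3 : Continuous fun p : ℝ × Cfg3 => ph3 p.1 := by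
    unfold ph3; fun_prop
  have hev : ∀ l : Fin 3, Continuous fun p : ℝ × Cfg3 => p.2 l :=
    fun l => (continuous_apply l).comp continuous_snd
  unfold G seg
  split_ifs <;> fun_prop

lemma lt_seg {s u v lo : ℝ} (hs0 : 0 ≤ s) (hs1 : s ≤ 1) (h1 : lo < u) (h2 : lo < v) :
    lo < seg s u v := by
  have := seg_lt_seg (u := lo) (v := lo) (u' := u) (v' := v) hs0 hs1 h1 h2
  rwa [seg_self] at this

lemma seg_lt {s u v hi : ℝ} (hs0 : 0 ≤ s) (hs1 : s ≤ 1) (h1 : u < hi) (h2 : v < hi) :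
    seg s u v < hi := by
  have := seg_lt_seg (u := u) (v := v) (u' := hi) (v' := hi) hs0 hs1 h1 h2
  rwa [seg_self] at this

lemma fin3_pair : ∀ i j : Fin 3, i ≠ 0 → j ≠ 0 → i ≠ j →
    (i = 1 ∧ j = 2) ∨ (i = 2 ∧ j = 1) := by decide

def Ysub (i j : Fin 3) : Set Cfg3 := {x | x ∈ Ycfg ∧ (x i).2.2 ≤ (x j).2.1}

lemma G_mem (i j : Fin 3) (hi : i ≠ 0) (hj : j ≠ 0) (hij : i ≠ j)
    {x : Cfg3} (hx : x ∈ Ysub i j) {t : ℝ} (ht0 : 0 ≤ t) (ht1 : t ≤ 1) :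
    G i j x t ∈ Ysub i j := by
  obtain ⟨⟨hnd, hbd, hdj, ⟨ha0, hb0⟩, hx1, hx2⟩, hord⟩ := hx
  obtain ⟨hs10, hs11⟩ := ph1_mem ht0 ht1
  obtain ⟨hs20, hs21⟩ := ph2_mem ht0 ht1
  obtain ⟨hs30, hs31⟩ := ph3_mem ht0 ht1
  have hai : (x i).1.1 = 0 := by rcases fin3_12 i hi with rfl | rfl <;> assumption
  have haj : (x j).1.1 = 0 := by rcases fin3_12 j hj with rfl | rfl <;> assumption
  have hk0 : G i j x t 0 =
      ((seg (ph1 t) (x 0).1.1 (seg (ph3 t) (max (x 0).1.1 (1 / 2)) (1 / 2)),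
        seg (ph1 t) (x 0).1.2 1),
       (seg (ph3 t) (x 0).2.1 (-1), seg (ph3 t) (x 0).2.2 1)) := by simp [G]
  have hki : G i j x t i =
      (((x i).1.1, seg (ph2 t) (x i).1.2 (seg (ph3 t) (min (x i).1.2 (1 / 2)) (1 / 2))),
       (seg (ph3 t) (x i).2.1 (-1), seg (ph3 t) (x i).2.2 0)) := by simp [G, hi]
  have hkj : G i j x t j =
      (((x j).1.1, seg (ph2 t) (x j).1.2 (seg (ph3 t) (min (x j).1.2 (1 / 2)) (1 / 2))),
       (seg (ph3 t) (x j).2.1 0, seg (ph3 t) (x j).2.2 1)) := by simp [G, hj, Ne.symm hij]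
  -- basic numeric facts
  have ha0b0 : (x 0).1.1 < (x 0).1.2 := (hnd 0).1
  have hb01 : (x 0).1.2 ≤ 1 := hb0
  have ha01 : (x 0).1.1 < 1 := lt_of_lt_of_le ha0b0 hb01
  have hbipos : 0 < (x i).1.2 := hai ▸ (hnd i).1
  have hbjpos : 0 < (x j).1.2 := haj ▸ (hnd j).1
  -- M and N facts
  have hMlo : (1 : ℝ) / 2 ≤ seg (ph3 t) (max (x 0).1.1 (1 / 2)) (1 / 2) :=
    le_seg hs30 hs31 (le_max_right _ _) le_rfl
  have hMhi : seg (ph3 t) (max (x 0).1.1 (1 / 2)) (1 / 2) < 1 :=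
    seg_lt hs30 hs31 (max_lt ha01 (by norm_num)) (by norm_num)
  have hM1 : seg (ph3 t) (max (x 0).1.1 (1 / 2)) (1 / 2) ≤ 1 := le_of_lt hMhi
  have hNi_pos : 0 < seg (ph3 t) (min (x i).1.2 (1 / 2)) (1 / 2) :=
    lt_seg hs30 hs31 (lt_min hbipos (by norm_num)) (by norm_num)
  have hNj_pos : 0 < seg (ph3 t) (min (x j).1.2 (1 / 2)) (1 / 2) :=
    lt_seg hs30 hs31 (lt_min hbjpos (by norm_num)) (by norm_num)
  have hNi_half : seg (ph3 t) (min (x i).1.2 (1 / 2)) (1 / 2) ≤ 1 / 2 :=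
    seg_le hs30 hs31 (min_le_right _ _) le_rfl
  have hNj_half : seg (ph3 t) (min (x j).1.2 (1 / 2)) (1 / 2) ≤ 1 / 2 :=
    seg_le hs30 hs31 (min_le_right _ _) le_rfl
  -- A0 facts
  have hA0_nonneg : 0 ≤ seg (ph1 t) (x 0).1.1 (seg (ph3 t) (max (x 0).1.1 (1 / 2)) (1 / 2)) :=
    le_seg hs10 hs11 ha0 (by linarith)
  have hA0_le1 : seg (ph1 t) (x 0).1.1 (seg (ph3 t) (max (x 0).1.1 (1 / 2)) (1 / 2)) ≤ 1 :=
    seg_le hs10 hs11 (le_of_lt ha01) hM1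
  have hB0_ge : (x 0).1.2 ≤ seg (ph1 t) (x 0).1.2 1 := by
    have := seg_le_seg (u := (x 0).1.2) (v := (x 0).1.2) (u' := (x 0).1.2) (v' := 1)
      hs10 hs11 le_rfl hb01
    rwa [seg_self] at this
  have hB0_le1 : seg (ph1 t) (x 0).1.2 1 ≤ 1 := seg_le hs10 hs11 hb01 le_rfl
  -- the three key disjointness facts
  have D0i : Disjoint (interior (rect (G i j x t 0))) (interior (rect (G i j x t i))) := by
    rw [hk0, hki]
    rcases eq_or_lt_of_le hs30 with hs3 | hs3
    · -- s3 = 0 : y–coordinates unchanged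
      rw [← hs3] at *
      rcases le_or_gt (x i).1.2 (x 0).1.1 with hc | hc
      · -- originally x-disjoint; stays so
        refine (disjoint_rect_x ?_).symm
        simp only [seg_zero]
        calc seg (ph2 t) (x i).1.2 (min (x i).1.2 (1 / 2))
            ≤ (x i).1.2 := seg_le hs20 hs21 le_rfl (min_le_left _ _)
          _ ≤ (x 0).1.1 := hc
          _ ≤ seg (ph1 t) (x 0).1.1 (max (x 0).1.1 (1 / 2)) :=
              le_seg hs10 hs11 le_rfl (le_max_left _ _)
      · -- x-overlap originally, so y-disjoint originally, y-coords are unchanged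
        have hov : max (x 0).1.1 (x i).1.1 < min (x 0).1.2 (x i).1.2 := by
          rw [hai, max_eq_left ha0]
          exact lt_min ha0b0 hc
        rcases y_sep (hdj 0 i (Ne.symm hi)) (hnd 0).2 (hnd i).2 hov with hy | hy
        · refine disjoint_rect_y ?_
          simpa only [seg_zero] using hy
        · refine (disjoint_rect_y ?_).symm
          simpa only [seg_zero] using hy
    · -- s3 > 0 : phase 3, x-disjoint
      obtain ⟨he1, he2⟩ := ph3_pos hs3
      refine (disjoint_rect_x ?_).symm
      simp only [he1, he2, seg_one]
      calc seg (ph3 t) (min (x i).1.2 (1 / 2)) (1 / 2) ≤ 1 / 2 := hNi_half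
        _ ≤ seg (ph3 t) (max (x 0).1.1 (1 / 2)) (1 / 2) := hMlo
  have D0j : Disjoint (interior (rect (G i j x t 0))) (interior (rect (G i j x t j))) := by
    rw [hk0, hkj]
    rcases eq_or_lt_of_le hs30 with hs3 | hs3
    · rw [← hs3] at *
      rcases le_or_gt (x j).1.2 (x 0).1.1 with hc | hc
      · refine (disjoint_rect_x ?_).symm
        simp only [seg_zero]
        calc seg (ph2 t) (x j).1.2 (min (x j).1.2 (1 / 2))
            ≤ (x j).1.2 := seg_le hs20 hs21 le_rfl (min_le_left _ _)
          _ ≤ (x 0).1.1 := hc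
          _ ≤ seg (ph1 t) (x 0).1.1 (max (x 0).1.1 (1 / 2)) :=
              le_seg hs10 hs11 le_rfl (le_max_left _ _)
      · have hov : max (x 0).1.1 (x j).1.1 < min (x 0).1.2 (x j).1.2 := by
          rw [haj, max_eq_left ha0]
          exact lt_min ha0b0 hc
        rcases y_sep (hdj 0 j (Ne.symm hj)) (hnd 0).2 (hnd j).2 hov with hy | hy
        · refine disjoint_rect_y ?_
          simpa only [seg_zero] using hy
        · refine (disjoint_rect_y ?_).symm
          simpa only [seg_zero] using hy
    · obtain ⟨he1, he2⟩ := ph3_pos hs3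
      refine (disjoint_rect_x ?_).symm
      simp only [he1, he2, seg_one]
      calc seg (ph3 t) (min (x j).1.2 (1 / 2)) (1 / 2) ≤ 1 / 2 := hNj_half
        _ ≤ seg (ph3 t) (max (x 0).1.1 (1 / 2)) (1 / 2) := hMlo
  have Dij : Disjoint (interior (rect (G i j x t i))) (interior (rect (G i j x t j))) := by
    rw [hki, hkj]
    exact disjoint_rect_y (seg_le_seg hs30 hs31 hord le_rfl)
  refine ⟨⟨?_, ?_, ?_, ⟨?_, ?_⟩, ?_, ?_⟩, ?_⟩
  · -- nondegeneracy
    intro k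
    rcases fin3_tri i j k hi hj hij with hk | hk | hk <;> rw [hk]
    · rw [hk0]
      exact ⟨seg_lt_seg hs10 hs11 ha0b0 hMhi,
        seg_lt_seg hs30 hs31 (hnd 0).2 (by norm_num)⟩
    · rw [hki, hai]
      exact ⟨lt_seg hs20 hs21 hbipos hNi_pos,
        seg_lt_seg hs30 hs31 (hnd i).2 (by norm_num)⟩
    · rw [hkj, haj]
      exact ⟨lt_seg hs20 hs21 hbjpos hNj_pos,
        seg_lt_seg hs30 hs31 (hnd j).2 (by norm_num)⟩
  · -- bounds
    intro k
    rcases fin3_tri i j k hi hj hij with hk | hk | hk <;> rw [hk]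
    · rw [hk0]
      refine ⟨by linarith, hB0_le1, ?_, ?_⟩
      · exact le_seg hs30 hs31 (hbd 0).2.2.1 (by norm_num)
      · exact seg_le hs30 hs31 (hbd 0).2.2.2 le_rfl
    · rw [hki, hai]
      refine ⟨by norm_num, ?_, ?_, ?_⟩
      · exact seg_le hs20 hs21 (hbd i).2.1 (by linarith)
      · exact le_seg hs30 hs31 (hbd i).2.2.1 (by norm_num)
      · exact seg_le hs30 hs31 (hbd i).2.2.2 (by norm_num)
    · rw [hkj, haj]
      refine ⟨by norm_num, ?_, ?_, ?_⟩
      · exact seg_le hs20 hs21 (hbd j).2.1 (by linarith)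
      · exact le_seg hs30 hs31 (hbd j).2.2.1 (by norm_num)
      · exact seg_le hs30 hs31 (hbd j).2.2.2 le_rfl
  · -- disjointness
    intro k l hkl
    rcases fin3_tri i j k hi hj hij with hk | hk | hk <;>
      rcases fin3_tri i j l hi hj hij with hl | hl | hl <;>
        rw [hk, hl] <;>
          first
            | exact absurd (hk.trans hl.symm) hkl
            | exact D0i
            | exact D0j
            | exact Dij
            | exact D0i.symm
            | exact D0j.symm
            | exact Dij.symm
  · -- 0 ≤ A0 and B0 ≤ 1
    rw [hk0]
    exact hA0_nonneg
  · rw [hk0]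
    exact hB0_le1
  · -- left endpoints of the open boxes
    rcases fin3_pair i j hi hj hij with ⟨h1, h2⟩ | ⟨h1, h2⟩ <;> subst h1 <;> subst h2
    · rw [hki]; exact hai
    · rw [hkj]; exact haj
  · rcases fin3_pair i j hi hj hij with ⟨h1, h2⟩ | ⟨h1, h2⟩ <;> subst h1 <;> subst h2
    · rw [hkj]; exact haj
    · rw [hki]; exact hai
  · -- the ordering is preserved
    rw [hki, hkj]
    exact seg_le_seg hs30 hs31 hord le_rfl

lemma pt_mem (i j : Fin 3) (hi : i ≠ 0) (hj : j ≠ 0) (hij : i ≠ j) : pt i j ∈ Ysub i j := by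
  have hp0 : pt i j 0 = ((1 / 2, 1), (-1, 1)) := by simp [pt]
  have hpi : pt i j i = ((0, 1 / 2), (-1, 0)) := by simp [pt, hi]
  have hpj : pt i j j = ((0, 1 / 2), (0, 1)) := by simp [pt, hj, Ne.symm hij]
  have D0i : Disjoint (interior (rect (pt i j 0))) (interior (rect (pt i j i))) := by
    refine (disjoint_rect_x ?_).symm
    rw [hp0, hpi]
  have D0j : Disjoint (interior (rect (pt i j 0))) (interior (rect (pt i j j))) := by
    refine (disjoint_rect_x ?_).symm
    rw [hp0, hpj]
  have Dij : Disjoint (interior (rect (pt i j i))) (interior (rect (pt i j j))) := by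
    refine disjoint_rect_y ?_
    rw [hpi, hpj]
  refine ⟨⟨?_, ?_, ?_, ⟨?_, ?_⟩, ?_, ?_⟩, ?_⟩
  · intro k
    rcases fin3_tri i j k hi hj hij with hk | hk | hk <;> rw [hk]
    · rw [hp0]; norm_num
    · rw [hpi]; norm_num
    · rw [hpj]; norm_num
  · intro k
    rcases fin3_tri i j k hi hj hij with hk | hk | hk <;> rw [hk]
    · rw [hp0]; norm_num
    · rw [hpi]; norm_num
    · rw [hpj]; norm_num
  · intro k l hkl
    rcases fin3_tri i j k hi hj hij with hk | hk | hk <;>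
      rcases fin3_tri i j l hi hj hij with hl | hl | hl <;>
        rw [hk, hl] <;>
          first
            | exact absurd (hk.trans hl.symm) hkl
            | exact D0i
            | exact D0j
            | exact Dij
            | exact D0i.symm
            | exact D0j.symm
            | exact Dij.symm
  · rw [hp0]; norm_num
  · rw [hp0]
  · rcases fin3_pair i j hi hj hij with ⟨h1, h2⟩ | ⟨h1, h2⟩ <;> subst h1 <;> subst h2
    · rw [hpi]
    · rw [hpj]
  · rcases fin3_pair i j hi hj hij with ⟨h1, h2⟩ | ⟨h1, h2⟩ <;> subst h1 <;> subst h2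
    · rw [hpj]
    · rw [hpi]
  · rw [hpi, hpj]

lemma Ysub_contractible (i j : Fin 3) (hi : i ≠ 0) (hj : j ≠ 0) (hij : i ≠ j) :
    ContractibleSpace ↥(Ysub i j) := by
  rw [contractible_iff_id_nullhomotopic]
  refine ⟨⟨pt i j, pt_mem i j hi hj hij⟩, ?_⟩
  constructor
  have hccore : Continuous fun q : unitInterval × ↥(Ysub i j) =>
      G i j (q.2 : Cfg3) (q.1 : ℝ) :=
    (continuous_G i j).comp
      ((continuous_subtype_val.comp continuous_fst).prodMk
        (continuous_subtype_val.comp continuous_snd))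
  refine ContinuousMap.Homotopy.mk
    ⟨fun q => ⟨G i j (q.2 : Cfg3) (q.1 : ℝ), G_mem i j hi hj hij q.2.2 q.1.2.1 q.1.2.2⟩,
      Continuous.subtype_mk hccore _⟩ ?_ ?_
  · intro x
    exact Subtype.ext (G_zero i j x.1)
  · intro x
    obtain ⟨⟨-, -, -, -, h1, h2⟩, -⟩ := x.2
    exact Subtype.ext (G_one i j x.1 h1 h2 hi hj hij)


/-- Every loop in `Y` is null-homotopic: for every `y ∈ Y`, the
fundamental group of `Y` at `y` is trivial.  (This is the vanishing
`H₁(SCvor₂(1, ±)) = 0` used in the non-formality argument.) -/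
theorem stmt16 : ∀ (y : ↥Ycfg) (p : Path y y), p.Homotopic (Path.refl y) := by
  intro y p
  obtain ⟨hnd, hbd, hdj, -, hy1, hy2⟩ := y.2
  suffices key : ∀ i j : Fin 3, i ≠ 0 → j ≠ 0 → i ≠ j →
      ((y : Cfg3) i).2.2 ≤ ((y : Cfg3) j).2.1 → p.Homotopic (Path.refl y) by
    have hdi : ((y : Cfg3) 1).2.2 ≤ ((y : Cfg3) 2).2.1 ∨
        ((y : Cfg3) 2).2.2 ≤ ((y : Cfg3) 1).2.1 := by
      apply y_sep (hdj 1 2 (by decide)) (hnd 1).2 (hnd 2).2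
      rw [hy1, hy2, max_self]
      exact lt_min (hy1 ▸ (hnd 1).1) (hy2 ▸ (hnd 2).1)
    rcases hdi with h | h
    · exact key 1 2 (by decide) (by decide) (by decide) h
    · exact key 2 1 (by decide) (by decide) (by decide) h
  intro i j hi hj hij hord
  -- the loop stays in `Ysub i j`
  have hcont : Continuous fun t : unitInterval => ((p t : ↥Ycfg) : Cfg3) :=
    continuous_subtype_val.comp p.continuous
  have hdic : ∀ t, ((p t : Cfg3) i).2.2 ≤ ((p t : Cfg3) j).2.1 ∨
      ((p t : Cfg3) j).2.2 ≤ ((p t : Cfg3) i).2.1 := by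
    intro t
    obtain ⟨hnd', hbd', hdj', -, h1', h2'⟩ := (p t).2
    have hai : ((p t : Cfg3) i).1.1 = 0 := by rcases fin3_12 i hi with rfl | rfl <;> assumption
    have haj : ((p t : Cfg3) j).1.1 = 0 := by rcases fin3_12 j hj with rfl | rfl <;> assumption
    apply y_sep (hdj' i j hij) (hnd' i).2 (hnd' j).2
    rw [hai, haj, max_self]
    exact lt_min (hai ▸ (hnd' i).1) (haj ▸ (hnd' j).1)
  have hmem : ∀ t : unitInterval, (p t : Cfg3) ∈ Ysub i j := by
    set A : Set unitInterval := {t | ((p t : Cfg3) i).2.2 ≤ ((p t : Cfg3) j).2.1} with hA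
    set B : Set unitInterval := {t | ((p t : Cfg3) j).2.2 ≤ ((p t : Cfg3) i).2.1} with hB
    have hcA : Continuous fun t : unitInterval => ((p t : Cfg3) i).2.2 :=
      (((continuous_apply i).comp hcont).snd).snd
    have hcA' : Continuous fun t : unitInterval => ((p t : Cfg3) j).2.1 :=
      (((continuous_apply j).comp hcont).snd).fst
    have hcB : Continuous fun t : unitInterval => ((p t : Cfg3) j).2.2 :=
      (((continuous_apply j).comp hcont).snd).snd
    have hcB' : Continuous fun t : unitInterval => ((p t : Cfg3) i).2.1 :=
      (((continuous_apply i).comp hcont).snd).fst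
    have hAclosed : IsClosed A := isClosed_le hcA hcA'
    have hBclosed : IsClosed B := isClosed_le hcB hcB'
    have hABempty : A ∩ B = ∅ := by
      ext t
      simp only [Set.mem_inter_iff, Set.mem_empty_iff_false, iff_false, hA, hB, Set.mem_setOf_eq]
      rintro ⟨ht1, ht2⟩
      obtain ⟨hnd', -⟩ := (p t).2
      have h1 := (hnd' i).2
      have h2 := (hnd' j).2
      linarith
    have hcompl : A = Bᶜ := by
      ext t
      simp only [hA, hB, Set.mem_setOf_eq, Set.mem_compl_iff]
      constructor
      · intro h hb
        have : t ∈ A ∩ B := ⟨h, hb⟩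
        rw [hABempty] at this
        exact this
      · intro h
        rcases hdic t with h' | h'
        · exact h'
        · exact absurd h' h
    have hclopen : IsClopen A := ⟨hAclosed, hcompl ▸ hBclosed.isOpen_compl⟩
    have hne : (0 : unitInterval) ∈ A := by
      have : p 0 = y := p.source
      simp only [hA, Set.mem_setOf_eq, this]
      exact hord
    rcases isClopen_iff.mp hclopen with hAe | hAu
    · rw [hAe] at hne
      exact absurd hne (Set.notMem_empty _)
    · intro t
      have htA : t ∈ A := hAu ▸ Set.mem_univ t
      exact ⟨(p t).2, htA⟩
  -- transfer the loop to `Ysub i j`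
  let y' : ↥(Ysub i j) := ⟨(y : Cfg3), ⟨y.2, hord⟩⟩
  let pc : C(unitInterval, ↥(Ysub i j)) :=
    ⟨fun t => ⟨(p t : Cfg3), hmem t⟩, Continuous.subtype_mk hcont _⟩
  have hs : pc 0 = y' := by
    apply Subtype.ext
    show ((p 0 : ↥Ycfg) : Cfg3) = (y : Cfg3)
    exact congrArg Subtype.val p.source
  have htg : pc 1 = y' := by
    apply Subtype.ext
    show ((p 1 : ↥Ycfg) : Cfg3) = (y : Cfg3)
    exact congrArg Subtype.val p.target
  let p' : Path y' y' := { toContinuousMap := pc, source' := hs, target' := htg }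
  haveI : ContractibleSpace ↥(Ysub i j) := Ysub_contractible i j hi hj hij
  have hh : p'.Homotopic (Path.refl y') := SimplyConnectedSpace.paths_homotopic p' (Path.refl y')
  let ι : C(↥(Ysub i j), ↥Ycfg) :=
    ⟨fun z => ⟨z.1, z.2.1⟩, Continuous.subtype_mk continuous_subtype_val _⟩
  have hmap := Path.Homotopic.map hh ι
  have e1 : p'.map ι.continuous = p := by
    ext t <;> rfl
  have e2 : (Path.refl y').map ι.continuous = Path.refl y := by
    ext t <;> rfl
  rw [e1, e2] at hmap
  exact hmap
end
end
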